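/- arXiv:1910.07501 — 9 statements merged into one kernel-verified Lean document; each statement's English description precedes it below -/
import Mathlib

section
/- Given a concave idle energy function E : ℝ≥0 → ℝ≥0, for every feasible schedule s₁ there exists a feasible schedule s₂ in block form such that the total idle energy of s₂ is at most the total idle energy of s₁. -/
open scoped NNReal

/-- A feasible schedule for `n` tasks (indexed `0, …, n-1`) with release times `r`,
deadlines `d` and processing times `p`: every task is executed within its time window
and the fixed processing order is respected without overlap. -/
def Feasible (n : ℕ) (r d p s : ℕ → ℝ) : Prop :=
  (∀ j, j < n → r j ≤ s j ∧ s j + p j ≤ d j) ∧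
  (∀ j, j + 1 < n → s j + p j ≤ s (j + 1))

/-- Tasks `i, i+1, …, j` form a block of schedule `s`: they are executed back-to-back
and the block is maximal (it cannot be extended to the left or to the right). -/
def IsBlock (n : ℕ) (p s : ℕ → ℝ) (i j : ℕ) : Prop :=
  i ≤ j ∧ j < n ∧
  (∀ k, i ≤ k → k < j → s k + p k = s (k + 1)) ∧
  (i = 0 ∨ s (i - 1) + p (i - 1) < s i) ∧
  (j = n - 1 ∨ s j + p j < s (j + 1))

/-- A schedule is in block form if every block contains a support, i.e. a task starting
at its release time or ending at its deadline. -/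
def BlockForm (n : ℕ) (r d p s : ℕ → ℝ) : Prop :=
  ∀ i j, IsBlock n p s i j → ∃ k, i ≤ k ∧ k ≤ j ∧ (s k = r k ∨ s k + p k = d k)

/-- Total idle energy of a schedule under the idle energy function `E`. -/
noncomputable def TotalEnergy (n : ℕ) (p s : ℕ → ℝ) (E : ℝ≥0 → ℝ≥0) : ℝ≥0 :=
  ∑ j ∈ Finset.range (n - 1), E (Real.toNNReal (s (j + 1) - (s j + p j)))


namespace Stmt1

noncomputable def shiftS (s : ℕ → ℝ) (i j : ℕ) (σ : ℝ) : ℕ → ℝ :=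
  fun k => if i ≤ k ∧ k ≤ j then s k + σ else s k

lemma shiftS_mem (s : ℕ → ℝ) (i j : ℕ) (σ : ℝ) {k : ℕ} (h1 : i ≤ k) (h2 : k ≤ j) :
    shiftS s i j σ k = s k + σ := by simp [shiftS, h1, h2]

lemma shiftS_not_mem (s : ℕ → ℝ) (i j : ℕ) (σ : ℝ) {k : ℕ} (h : ¬(i ≤ k ∧ k ≤ j)) :
    shiftS s i j σ k = s k := by simp only [shiftS, if_neg h]

lemma shiftS_zero (s : ℕ → ℝ) (i j : ℕ) : shiftS s i j 0 = s := by
  funext k; simp [shiftS]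

lemma shiftS_feasible {n : ℕ} {r d p s : ℕ → ℝ} {i j : ℕ} {σ : ℝ}
    (hs : Feasible n r d p s)
    (h1 : ∀ k, i ≤ k → k ≤ j → r k ≤ s k + σ)
    (h2 : ∀ k, i ≤ k → k ≤ j → s k + σ + p k ≤ d k)
    (h3 : i ≠ 0 → s (i-1) + p (i-1) ≤ s i + σ)
    (h4 : j + 1 < n → s j + σ + p j ≤ s (j+1)) :
    Feasible n r d p (shiftS s i j σ) := by
  constructor
  · intro k hk
    by_cases hk' : i ≤ k ∧ k ≤ j
    · rw [shiftS_mem s i j σ hk'.1 hk'.2]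
      exact ⟨h1 k hk'.1 hk'.2, h2 k hk'.1 hk'.2⟩
    · rw [shiftS_not_mem s i j σ hk']
      exact hs.1 k hk
  · intro t ht
    by_cases hta : i ≤ t ∧ t ≤ j
    · by_cases htb : t + 1 ≤ j
      · rw [shiftS_mem s i j σ hta.1 hta.2, shiftS_mem s i j σ (by omega) htb]
        linarith [hs.2 t ht]
      · have htj : t = j := by omega
        rw [shiftS_mem s i j σ hta.1 hta.2, shiftS_not_mem s i j σ (by omega)]
        subst htj; exact h4 ht
    · by_cases htb : i ≤ t + 1 ∧ t + 1 ≤ j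
      · have hi : i = t + 1 := by omega
        rw [shiftS_not_mem s i j σ hta, shiftS_mem s i j σ htb.1 htb.2]
        have h := h3 (by omega)
        rw [show i - 1 = t by omega] at h
        rw [hi] at h
        exact h
      · rw [shiftS_not_mem s i j σ hta, shiftS_not_mem s i j σ htb]
        exact hs.2 t ht

def spec (n i j : ℕ) : Finset ℕ :=
  (if i = 0 then ∅ else {i-1}) ∪ (if j < n - 1 then {j} else ∅)

lemma mem_spec {n i j t : ℕ} :
    t ∈ spec n i j ↔ (i ≠ 0 ∧ t = i - 1) ∨ (j < n - 1 ∧ t = j) := by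
  simp only [spec, Finset.mem_union]
  split_ifs with h0 hj hj <;> simp_all

lemma spec_subset {n i j : ℕ} (hij : i ≤ j) (hjn : j < n) :
    spec n i j ⊆ Finset.range (n - 1) := by
  intro t ht
  rw [mem_spec] at ht
  rw [Finset.mem_range]
  rcases ht with ⟨h0, rfl⟩ | ⟨hj, rfl⟩ <;> omega


noncomputable def Wfun (n : ℕ) (p s : ℕ → ℝ) (E : ℝ≥0 → ℝ≥0) (i j : ℕ) (σ : ℝ) : ℝ≥0 :=
  (if i = 0 then 0 else E (Real.toNNReal (s i - (s (i-1) + p (i-1)) + σ))) +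
  (if j < n - 1 then E (Real.toNNReal (s (j+1) - (s j + p j) - σ)) else 0)


lemma shiftS_energy {n : ℕ} (p s : ℕ → ℝ) (E : ℝ≥0 → ℝ≥0) {i j : ℕ} (σ : ℝ)
    (hij : i ≤ j) (hjn : j < n) :
    TotalEnergy n p (shiftS s i j σ) E
      = (∑ t ∈ Finset.range (n-1) \ spec n i j, E (Real.toNNReal (s (t+1) - (s t + p t))))
        + Wfun n p s E i j σ := by
  unfold TotalEnergy
  rw [← Finset.sum_sdiff (spec_subset hij hjn)]
  congr 1
  · apply Finset.sum_congr rfl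
    intro t ht
    simp only [Finset.mem_sdiff, Finset.mem_range, mem_spec] at ht
    obtain ⟨htn, hts⟩ := ht
    push_neg at hts
    by_cases hta : i ≤ t ∧ t ≤ j
    · have htj : t < j := by
        rcases lt_or_eq_of_le hta.2 with h | h
        · exact h
        · exact absurd (hts.2 (by omega)) (by omega)
      rw [shiftS_mem s i j σ hta.1 hta.2, shiftS_mem s i j σ (by omega) (by omega)]
      congr 2
      ring
    · by_cases htb : i ≤ t + 1 ∧ t + 1 ≤ j
      · exfalso
        have hi : i = t + 1 := by omega
        exact absurd (by omega : t = i - 1) (hts.1 (by omega))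
      · rw [shiftS_not_mem s i j σ hta, shiftS_not_mem s i j σ htb]
  · unfold Wfun spec
    by_cases h0 : i = 0 <;> by_cases hj : j < n - 1
    · rw [if_pos h0, if_pos hj, if_pos h0, if_pos hj]
      rw [Finset.empty_union, Finset.sum_singleton]
      rw [shiftS_not_mem s i j σ (by omega), shiftS_mem s i j σ (by omega) le_rfl]
      rw [zero_add]
      congr 2
      ring
    · rw [if_pos h0, if_neg hj, if_pos h0, if_neg hj]
      simp
    · rw [if_neg h0, if_pos hj, if_neg h0, if_pos hj]
      rw [← Finset.insert_eq, Finset.sum_insert (by simp; omega), Finset.sum_singleton]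
      rw [show i - 1 + 1 = i by omega]
      rw [shiftS_mem s i j σ (k := i) le_rfl hij,
        shiftS_not_mem s i j σ (k := i - 1) (by omega),
        shiftS_not_mem s i j σ (k := j + 1) (by omega),
        shiftS_mem s i j σ (k := j) hij le_rfl]
      congr 3
      · ring
      · ring
    · rw [if_neg h0, if_neg hj, if_neg h0, if_neg hj]
      rw [Finset.union_empty, Finset.sum_singleton, add_zero]
      rw [show i - 1 + 1 = i by omega]
      rw [shiftS_mem s i j σ (k := i) le_rfl hij,
        shiftS_not_mem s i j σ (k := i - 1) (by omega)]
      congr 2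
      ring

open Classical in
/-- Unsupported tasks. -/
noncomputable def PhiSet (n : ℕ) (r d p s : ℕ → ℝ) : Finset ℕ :=
  (Finset.range n).filter fun k => ¬(s k = r k ∨ s k + p k = d k)

open Classical in
/-- Block starts. -/
noncomputable def BSet (n : ℕ) (p s : ℕ → ℝ) : Finset ℕ :=
  (Finset.range n).filter fun t => t = 0 ∨ s (t-1) + p (t-1) < s t

lemma mem_PhiSet {n : ℕ} {r d p s : ℕ → ℝ} {k : ℕ} :
    k ∈ PhiSet n r d p s ↔ k < n ∧ ¬(s k = r k ∨ s k + p k = d k) := by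
  classical
  simp [PhiSet]

lemma mem_BSet {n : ℕ} {p s : ℕ → ℝ} {t : ℕ} :
    t ∈ BSet n p s ↔ t < n ∧ (t = 0 ∨ s (t-1) + p (t-1) < s t) := by
  classical
  simp [BSet]

lemma PhiSet_shift_subset {n : ℕ} {r d p s : ℕ → ℝ} {i j : ℕ} (σ : ℝ)
    (hun : ∀ k, i ≤ k → k ≤ j → ¬(s k = r k ∨ s k + p k = d k)) :
    PhiSet n r d p (shiftS s i j σ) ⊆ PhiSet n r d p s := by
  intro k hk
  rw [mem_PhiSet] at hk ⊢
  refine ⟨hk.1, ?_⟩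
  by_cases hkb : i ≤ k ∧ k ≤ j
  · exact hun k hkb.1 hkb.2
  · rw [shiftS_not_mem s i j σ hkb] at hk; exact hk.2

lemma BSet_shift_subset {n : ℕ} {p s : ℕ → ℝ} {i j : ℕ} (σ : ℝ)
    (hgl : i ≠ 0 → s (i-1) + p (i-1) < s i)
    (hgr : j + 1 < n → s j + p j < s (j+1)) :
    BSet n p (shiftS s i j σ) ⊆ BSet n p s := by
  intro t ht
  rw [mem_BSet] at ht ⊢
  obtain ⟨htn, h0 | hlt⟩ := ht
  · exact ⟨htn, Or.inl h0⟩
  refine ⟨htn, ?_⟩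
  by_cases ht0 : t = 0
  · exact Or.inl ht0
  right
  obtain ⟨t', rfl⟩ : ∃ t', t = t' + 1 := ⟨t - 1, by omega⟩
  rw [show t' + 1 - 1 = t' by omega] at hlt ⊢
  by_cases ha : i ≤ t' ∧ t' ≤ j
  · by_cases hb : t' + 1 ≤ j
    · rw [shiftS_mem s i j σ ha.1 ha.2, shiftS_mem s i j σ (by omega) hb] at hlt
      linarith
    · have : t' = j := by omega
      subst this
      exact hgr htn
  · by_cases hb : i ≤ t' + 1 ∧ t' + 1 ≤ j
    · have h := hgl (by omega)
      rw [show i - 1 = t' by omega] at h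
      rw [show i = t' + 1 by omega] at h
      exact h
    · rw [shiftS_not_mem s i j σ ha, shiftS_not_mem s i j σ hb] at hlt
      exact hlt


lemma Wfun_min_le {n : ℕ} (p s : ℕ → ℝ) (E : ℝ≥0 → ℝ≥0)
    (hconc : ∀ a b l : ℝ≥0, l ≤ 1 → l * E a + (1 - l) * E b ≤ E (l * a + (1 - l) * b))
    {i j : ℕ} {a b : ℝ} (hapos : 0 < a) (hbpos : 0 < b)
    (hA : i ≠ 0 → a ≤ s i - (s (i-1) + p (i-1)))
    (hB : j < n - 1 → b ≤ s (j+1) - (s j + p j)) :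
    min (Wfun n p s E i j (-a)) (Wfun n p s E i j b) ≤ Wfun n p s E i j 0 := by
  have hab : (0:ℝ) < a + b := by linarith
  set l : ℝ≥0 := Real.toNNReal (b / (a + b)) with hl
  set l' : ℝ≥0 := Real.toNNReal (a / (a + b)) with hl'
  have hll' : l + l' = 1 := by
    rw [hl, hl', ← Real.toNNReal_add (by positivity) (by positivity)]
    rw [← add_div, show b + a = a + b by ring, div_self (ne_of_gt hab),
      Real.toNNReal_one]
  have hl1 : l ≤ 1 := by rw [← hll']; exact le_self_add
  have h1l : (1:ℝ≥0) - l = l' := by rw [← hll', add_tsub_cancel_left]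
  -- key inequality for a left-boundary-style term
  have key : ∀ x : ℝ, a ≤ x →
      l * E (Real.toNNReal (x + -a)) + l' * E (Real.toNNReal (x + b))
        ≤ E (Real.toNNReal x) := by
    intro x hx
    have h := hconc (Real.toNNReal (x + -a)) (Real.toNNReal (x + b)) l hl1
    rw [h1l] at h
    have harg : l * Real.toNNReal (x + -a) + l' * Real.toNNReal (x + b)
        = Real.toNNReal x := by
      apply NNReal.coe_injective
      push_cast
      rw [Real.coe_toNNReal _ (show (0:ℝ) ≤ x + -a by linarith),
        Real.coe_toNNReal _ (show (0:ℝ) ≤ x + b by linarith),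
        Real.coe_toNNReal _ (show (0:ℝ) ≤ x by linarith),
        hl, hl',
        Real.coe_toNNReal _ (show (0:ℝ) ≤ b / (a+b) by positivity),
        Real.coe_toNNReal _ (show (0:ℝ) ≤ a / (a+b) by positivity)]
      field_simp
      ring
    rw [harg] at h
    exact h
  have keyR : ∀ x : ℝ, b ≤ x →
      l * E (Real.toNNReal (x - -a)) + l' * E (Real.toNNReal (x - b))
        ≤ E (Real.toNNReal x) := by
    intro x hx
    have h := hconc (Real.toNNReal (x - -a)) (Real.toNNReal (x - b)) l hl1
    rw [h1l] at h
    have harg : l * Real.toNNReal (x - -a) + l' * Real.toNNReal (x - b)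
        = Real.toNNReal x := by
      apply NNReal.coe_injective
      push_cast
      rw [Real.coe_toNNReal _ (show (0:ℝ) ≤ x - -a by linarith),
        Real.coe_toNNReal _ (show (0:ℝ) ≤ x - b by linarith),
        Real.coe_toNNReal _ (show (0:ℝ) ≤ x by linarith),
        hl, hl',
        Real.coe_toNNReal _ (show (0:ℝ) ≤ b / (a+b) by positivity),
        Real.coe_toNNReal _ (show (0:ℝ) ≤ a / (a+b) by positivity)]
      field_simp
      ring
    rw [harg] at h
    exact h
  have main : l * Wfun n p s E i j (-a) + l' * Wfun n p s E i j b
      ≤ Wfun n p s E i j 0 := by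
    unfold Wfun
    simp only [add_zero, sub_zero]
    split_ifs with h0 hj hj'
    · -- i = 0, j < n - 1
      simp only [zero_add]
      exact keyR _ (hB hj)
    · -- i = 0, ¬ j < n - 1
      simp
    · -- i ≠ 0, j < n - 1
      rw [mul_add, mul_add, add_add_add_comm]
      exact add_le_add (key _ (hA h0)) (keyR _ (hB hj'))
    · -- i ≠ 0, ¬ j < n - 1
      simp only [add_zero]
      exact key _ (hA h0)
  calc min (Wfun n p s E i j (-a)) (Wfun n p s E i j b)
      = l * min (Wfun n p s E i j (-a)) (Wfun n p s E i j b)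
        + l' * min (Wfun n p s E i j (-a)) (Wfun n p s E i j b) := by
        rw [← add_mul, hll', one_mul]
    _ ≤ l * Wfun n p s E i j (-a) + l' * Wfun n p s E i j b :=
        add_le_add (mul_le_mul_right (min_le_left _ _) l)
          (mul_le_mul_right (min_le_right _ _) l')
    _ ≤ Wfun n p s E i j 0 := main

lemma move_step {n : ℕ} {r d p : ℕ → ℝ} {E : ℝ≥0 → ℝ≥0}
    (hconc : ∀ a b l : ℝ≥0, l ≤ 1 → l * E a + (1 - l) * E b ≤ E (l * a + (1 - l) * b))
    {s : ℕ → ℝ} (hs : Feasible n r d p s) {i j : ℕ}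
    (hblk : IsBlock n p s i j)
    (hun : ∀ k, i ≤ k → k ≤ j → ¬(s k = r k ∨ s k + p k = d k)) :
    ∃ s', Feasible n r d p s' ∧ TotalEnergy n p s' E ≤ TotalEnergy n p s E ∧
      (PhiSet n r d p s').card + (BSet n p s').card
        < (PhiSet n r d p s).card + (BSet n p s).card := by
  obtain ⟨hij, hjn, hchain, hLm, hRm⟩ := hblk
  have hIcc : (Finset.Icc i j).Nonempty := ⟨i, Finset.mem_Icc.mpr ⟨le_rfl, hij⟩⟩
  have hrel : ∀ k, i ≤ k → k ≤ j → r k < s k := by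
    intro k h1 h2
    have h3 := (hs.1 k (lt_of_le_of_lt h2 hjn)).1
    refine lt_of_le_of_ne h3 ?_
    intro h
    exact hun k h1 h2 (Or.inl h.symm)
  have hdl : ∀ k, i ≤ k → k ≤ j → s k + p k < d k := by
    intro k h1 h2
    have h3 := (hs.1 k (lt_of_le_of_lt h2 hjn)).2
    refine lt_of_le_of_ne h3 ?_
    intro h
    exact hun k h1 h2 (Or.inr h)
  set δL := (Finset.Icc i j).inf' hIcc (fun k => s k - r k) with hδL
  set δD := (Finset.Icc i j).inf' hIcc (fun k => d k - (s k + p k)) with hδD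
  have hδLpos : 0 < δL := by
    rw [hδL, Finset.lt_inf'_iff]
    intro k hk
    rw [Finset.mem_Icc] at hk
    have := hrel k hk.1 hk.2; linarith
  have hδDpos : 0 < δD := by
    rw [hδD, Finset.lt_inf'_iff]
    intro k hk
    rw [Finset.mem_Icc] at hk
    have := hdl k hk.1 hk.2; linarith
  have hδLle : ∀ k, i ≤ k → k ≤ j → δL ≤ s k - r k := fun k h1 h2 =>
    Finset.inf'_le _ (Finset.mem_Icc.mpr ⟨h1, h2⟩)
  have hδDle : ∀ k, i ≤ k → k ≤ j → δD ≤ d k - (s k + p k) := fun k h1 h2 =>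
    Finset.inf'_le _ (Finset.mem_Icc.mpr ⟨h1, h2⟩)
  have hgl : i ≠ 0 → s (i-1) + p (i-1) < s i := fun h0 => hLm.resolve_left h0
  have hgr : j + 1 < n → s j + p j < s (j+1) := fun h => hRm.resolve_left (by omega)
  set a := if i = 0 then δL else min δL (s i - (s (i-1) + p (i-1))) with ha
  set b := if j < n - 1 then min δD (s (j+1) - (s j + p j)) else δD with hb
  have hapos : 0 < a := by
    rw [ha]; split_ifs with h
    · exact hδLpos
    · exact lt_min hδLpos (by have := hgl h; linarith)
  have hbpos : 0 < b := by
    rw [hb]; split_ifs with h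
    · exact lt_min hδDpos (by have := hgr (by omega); linarith)
    · exact hδDpos
  have haδL : a ≤ δL := by
    rw [ha]; split_ifs
    · exact le_rfl
    · exact min_le_left _ _
  have hbδD : b ≤ δD := by
    rw [hb]; split_ifs
    · exact min_le_left _ _
    · exact le_rfl
  have hagL : i ≠ 0 → a ≤ s i - (s (i-1) + p (i-1)) := by
    intro h0; rw [ha, if_neg h0]; exact min_le_right _ _
  have hbgR : j < n - 1 → b ≤ s (j+1) - (s j + p j) := by
    intro h; rw [hb, if_pos h]; exact min_le_right _ _
  have hfeas : ∀ σ : ℝ, -a ≤ σ → σ ≤ b → Feasible n r d p (shiftS s i j σ) := by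
    intro σ h1 h2
    apply shiftS_feasible hs
    · intro k hk1 hk2; have := hδLle k hk1 hk2; have := hδDle k hk1 hk2; linarith
    · intro k hk1 hk2; have := hδDle k hk1 hk2; linarith
    · intro h0; have := hagL h0; linarith
    · intro hjn'; have := hbgR (by omega); linarith
  have hE : ∀ σ : ℝ, TotalEnergy n p (shiftS s i j σ) E
      = (∑ t ∈ Finset.range (n-1) \ spec n i j, E (Real.toNNReal (s (t+1) - (s t + p t))))
        + Wfun n p s E i j σ := fun σ => shiftS_energy p s E σ hij hjn
  have hEs : TotalEnergy n p s E
      = (∑ t ∈ Finset.range (n-1) \ spec n i j, E (Real.toNNReal (s (t+1) - (s t + p t))))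
        + Wfun n p s E i j 0 := by
    conv_lhs => rw [← shiftS_zero s i j]
    exact hE 0
  have hmin := Wfun_min_le p s E hconc hapos hbpos hagL hbgR
  have hPsub : ∀ σ : ℝ, PhiSet n r d p (shiftS s i j σ) ⊆ PhiSet n r d p s :=
    fun σ => PhiSet_shift_subset σ hun
  have hBsub : ∀ σ : ℝ, BSet n p (shiftS s i j σ) ⊆ BSet n p s :=
    fun σ => BSet_shift_subset σ hgl hgr
  by_cases hW : Wfun n p s E i j (-a) ≤ Wfun n p s E i j b
  · -- move left by a
    refine ⟨shiftS s i j (-a), hfeas (-a) le_rfl (by linarith), ?_, ?_⟩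
    · rw [hE (-a), hEs]
      refine add_le_add_right ?_ _
      rw [← min_eq_left hW]
      exact hmin
    · have hBle := Finset.card_le_card (hBsub (-a))
      have hPle := Finset.card_le_card (hPsub (-a))
      by_cases hsup : a = δL
      · -- some task hits its release time
        obtain ⟨k₀, hk₀m, hk₀⟩ := Finset.exists_mem_eq_inf' hIcc (fun k => s k - r k)
        rw [Finset.mem_Icc] at hk₀m
        have hPlt : (PhiSet n r d p (shiftS s i j (-a))).card < (PhiSet n r d p s).card := by
          apply Finset.card_lt_card
          rw [Finset.ssubset_iff_of_subset (hPsub (-a))]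
          refine ⟨k₀, ?_, ?_⟩
          · rw [mem_PhiSet]
            exact ⟨by omega, hun k₀ hk₀m.1 hk₀m.2⟩
          · rw [mem_PhiSet]
            rintro ⟨-, hcon⟩
            apply hcon
            left
            rw [shiftS_mem s i j (-a) hk₀m.1 hk₀m.2, hsup, hδL, hk₀]
            ring
        exact add_lt_add_of_lt_of_le hPlt hBle
      · -- the block merges into the previous one
        have h0 : i ≠ 0 := by
          intro h; rw [ha, if_pos h] at hsup; exact hsup rfl
        have hcase : a = s i - (s (i-1) + p (i-1)) := by
          rw [ha, if_neg h0]
          rcases le_total δL (s i - (s (i-1) + p (i-1))) with h | h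
          · exfalso; apply hsup; rw [ha, if_neg h0, min_eq_left h]
          · exact min_eq_right h
        have hBlt : (BSet n p (shiftS s i j (-a))).card < (BSet n p s).card := by
          apply Finset.card_lt_card
          rw [Finset.ssubset_iff_of_subset (hBsub (-a))]
          refine ⟨i, ?_, ?_⟩
          · rw [mem_BSet]
            exact ⟨by omega, Or.inr (hgl h0)⟩
          · rw [mem_BSet]
            rintro ⟨-, h | h⟩
            · exact h0 h
            · rw [shiftS_not_mem s i j (-a) (k := i-1) (by omega),
                shiftS_mem s i j (-a) le_rfl hij] at h
              rw [hcase] at h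
              linarith
        exact add_lt_add_of_le_of_lt hPle hBlt
  · -- move right by b
    refine ⟨shiftS s i j b, hfeas b (by linarith) le_rfl, ?_, ?_⟩
    · rw [hE b, hEs]
      refine add_le_add_right ?_ _
      rw [← min_eq_right (le_of_not_ge hW)]
      exact hmin
    · have hBle := Finset.card_le_card (hBsub b)
      have hPle := Finset.card_le_card (hPsub b)
      by_cases hsup : b = δD
      · -- some task hits its deadline
        obtain ⟨k₀, hk₀m, hk₀⟩ := Finset.exists_mem_eq_inf' hIcc (fun k => d k - (s k + p k))
        rw [Finset.mem_Icc] at hk₀m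
        have hPlt : (PhiSet n r d p (shiftS s i j b)).card < (PhiSet n r d p s).card := by
          apply Finset.card_lt_card
          rw [Finset.ssubset_iff_of_subset (hPsub b)]
          refine ⟨k₀, ?_, ?_⟩
          · rw [mem_PhiSet]
            exact ⟨by omega, hun k₀ hk₀m.1 hk₀m.2⟩
          · rw [mem_PhiSet]
            rintro ⟨-, hcon⟩
            apply hcon
            right
            rw [shiftS_mem s i j b hk₀m.1 hk₀m.2, hsup, hδD, hk₀]
            ring
        exact add_lt_add_of_lt_of_le hPlt hBle
      · -- the block merges into the next one
        have hjlt : j < n - 1 := by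
          by_contra h
          rw [hb, if_neg h] at hsup
          exact hsup rfl
        have hcase : b = s (j+1) - (s j + p j) := by
          rw [hb, if_pos hjlt]
          rcases le_total δD (s (j+1) - (s j + p j)) with h | h
          · exfalso; apply hsup; rw [hb, if_pos hjlt, min_eq_left h]
          · exact min_eq_right h
        have hBlt : (BSet n p (shiftS s i j b)).card < (BSet n p s).card := by
          apply Finset.card_lt_card
          rw [Finset.ssubset_iff_of_subset (hBsub b)]
          refine ⟨j + 1, ?_, ?_⟩
          · rw [mem_BSet]
            refine ⟨by omega, Or.inr ?_⟩
            rw [show j + 1 - 1 = j by omega]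
            exact hgr (by omega)
          · rw [mem_BSet]
            rintro ⟨-, h | h⟩
            · omega
            · rw [show j + 1 - 1 = j by omega] at h
              rw [shiftS_not_mem s i j b (k := j+1) (by omega),
                shiftS_mem s i j b hij le_rfl] at h
              rw [hcase] at h
              linarith
        exact add_lt_add_of_le_of_lt hPle hBlt

lemma aux {n : ℕ} {r d p : ℕ → ℝ} {E : ℝ≥0 → ℝ≥0}
    (hconc : ∀ a b l : ℝ≥0, l ≤ 1 → l * E a + (1 - l) * E b ≤ E (l * a + (1 - l) * b)) :
    ∀ m (s : ℕ → ℝ), Feasible n r d p s →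
      (PhiSet n r d p s).card + (BSet n p s).card ≤ m →
      ∃ s₂, Feasible n r d p s₂ ∧ BlockForm n r d p s₂ ∧
        TotalEnergy n p s₂ E ≤ TotalEnergy n p s E := by
  intro m
  induction m with
  | zero =>
    intro s hs hm
    by_cases hbf : BlockForm n r d p s
    · exact ⟨s, hs, hbf, le_rfl⟩
    · exfalso
      unfold BlockForm at hbf
      push_neg at hbf
      obtain ⟨i, j, hblk, hun⟩ := hbf
      obtain ⟨s', -, -, hlt⟩ := move_step hconc hs hblk
        (fun k h1 h2 h => h.elim (hun k h1 h2).1 (hun k h1 h2).2)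
      omega
  | succ m ih =>
    intro s hs hm
    by_cases hbf : BlockForm n r d p s
    · exact ⟨s, hs, hbf, le_rfl⟩
    · unfold BlockForm at hbf
      push_neg at hbf
      obtain ⟨i, j, hblk, hun⟩ := hbf
      obtain ⟨s', hf', hE', hlt⟩ := move_step hconc hs hblk
        (fun k h1 h2 h => h.elim (hun k h1 h2).1 (hun k h1 h2).2)
      obtain ⟨s₂, g1, g2, g3⟩ := ih s' hf' (by omega)
      exact ⟨s₂, g1, g2, le_trans g3 hE'⟩

end Stmt1

/-- Given a concave idle energy function, for every feasible schedule
there is a feasible block-form schedule whose total idle energy is at most as large. -/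
theorem stmt_1 (n : ℕ) (r d p : ℕ → ℝ) (E : ℝ≥0 → ℝ≥0)
    (hr : ∀ j, j < n → 0 ≤ r j) (hp : ∀ j, j < n → 0 < p j)
    (hrdp : ∀ j, j < n → r j + p j ≤ d j)
    (hconc : ∀ a b l : ℝ≥0, l ≤ 1 → l * E a + (1 - l) * E b ≤ E (l * a + (1 - l) * b))
    (s₁ : ℕ → ℝ) (hs₁ : Feasible n r d p s₁) :
    ∃ s₂ : ℕ → ℝ, Feasible n r d p s₂ ∧ BlockForm n r d p s₂ ∧
      TotalEnergy n p s₂ E ≤ TotalEnergy n p s₁ E := by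
  exact Stmt1.aux hconc
    ((Stmt1.PhiSet n r d p s₁).card + (Stmt1.BSet n p s₁).card) s₁ hs₁ le_rfl
end

section
/- If after propagating release times by r_j := max{r_{j−1} + p_{j−1}, r_j} for j = 2,…,n and deadlines by d̃_j := min{d̃_{j+1} − p_{j+1}, d̃_j} for j = n−1,…,1 there exists a task j whose propagated execution window satisfies d̃_j − r_j < p_j, then no feasible schedule exists for the given order of tasks. -/
/-- Propagated release times: `r'_0 = r_0`, `r'_{j+1} = max (r'_j + p_j) r_{j+1}`. -/
noncomputable def propR (r p : ℕ → ℝ) : ℕ → ℝ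
  | 0 => r 0
  | j + 1 => max (propR r p j + p j) (r (j + 1))

/-- Propagated deadlines, indexed from the back: `propDrev n d p k` is the propagated
deadline of task `n-1-k`, i.e. `d'_{n-1} = d_{n-1}` and
`d'_{j} = min (d'_{j+1} - p_{j+1}) (d_j)`. -/
noncomputable def propDrev (n : ℕ) (d p : ℕ → ℝ) : ℕ → ℝ
  | 0 => d (n - 1)
  | k + 1 => min (propDrev n d p k - p (n - 1 - k)) (d (n - 1 - (k + 1)))

namespace Feasible

variable {n : ℕ} {r d p s : ℕ → ℝ}

theorem propR_le (hs : Feasible n r d p s) : ∀ j, j < n → propR r p j ≤ s j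
  | 0, hj => (hs.1 0 hj).1
  | j + 1, hj => by
    have ih := hs.propR_le j (by omega)
    have hchain := hs.2 j hj
    exact max_le (by linarith) (hs.1 (j + 1) hj).1

theorem add_le_propDrev (hs : Feasible n r d p s) :
    ∀ k, k < n → s (n - 1 - k) + p (n - 1 - k) ≤ propDrev n d p k
  | 0, hk => (hs.1 (n - 1) (by omega)).2
  | k + 1, hk => by
    have ih := hs.add_le_propDrev k (by omega)
    have hchain : s (n - 1 - (k + 1)) + p (n - 1 - (k + 1)) ≤ s (n - 1 - k) := by
      have h := hs.2 (n - 1 - (k + 1)) (by omega)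
      rwa [show n - 1 - (k + 1) + 1 = n - 1 - k by omega] at h
    exact le_min (by linarith) (hs.1 _ (by omega)).2

theorem le_propDrev_sub_propR (hs : Feasible n r d p s) {j : ℕ} (hj : j < n) :
    p j ≤ propDrev n d p (n - 1 - j) - propR r p j := by
  have hdead := hs.add_le_propDrev (n - 1 - j) (by omega)
  rw [show n - 1 - (n - 1 - j) = j by omega] at hdead
  linarith [hs.propR_le j hj]

end Feasible

theorem stmt_2_general (n : ℕ) (r d p : ℕ → ℝ)
    (hviol : ∃ j, j < n ∧ propDrev n d p (n - 1 - j) - propR r p j < p j) :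
    ¬ ∃ s : ℕ → ℝ, Feasible n r d p s := by
  rintro ⟨s, hs⟩
  obtain ⟨j, hj, hshort⟩ := hviol
  exact (hs.le_propDrev_sub_propR hj).not_gt hshort

/-- If after propagation of release times and deadlines some task has
an execution window shorter than its processing time, then no feasible schedule exists
for the given order of tasks. -/
theorem stmt_2 (n : ℕ) (r d p : ℕ → ℝ)
    (hr : ∀ j, j < n → 0 ≤ r j) (hp : ∀ j, j < n → 0 < p j)
    (hrdp : ∀ j, j < n → r j + p j ≤ d j)
    (hviol : ∃ j, j < n ∧ propDrev n d p (n - 1 - j) - propR r p j < p j) :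
    ¬ ∃ s : ℕ → ℝ, Feasible n r d p s :=
  stmt_2_general n r d p hviol
end

section
/- Let u : [0, t_f] → ℝ be continuous, let x0 ∈ ℝ and ψ0 ∈ ℝ, and let x(t) = exp(−α·t − ρ·∫₀ᵗ u) · (x0 + β·∫₀ᵗ exp(α·η + ρ·∫₀^η u)·u(η) dη) and ψ(t) = ψ0·exp(α·t + ρ·∫₀ᵗ u) be the corresponding state and adjoint trajectories. Then the switching function φ(t) = ψ(t)·(β − ρ·x(t)) + 1 satisfies φ(0) = ψ0·(β − ρ·x0) + 1 and φ′(t) = ψ0·α·β·exp(α·t + ρ·∫₀ᵗ u(η) dη) for all t ∈ (0, t_f); in particular, if ψ0 > 0 then φ is strictly increasing and if ψ0 < 0 then φ is strictly decreasing on [0, t_f]. -/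
/-!
With `E(t) = exp(α t + ρ ∫₀ᵗ u)`, the adjoint is `ψ = ψ0 E` and the state is
`x = E⁻¹ (x0 + β ∫₀ᵗ E u)`, so the exponentials in `ψ x` cancel and
`φ = ψ0 β E − ρ ψ0 (x0 + β ∫₀ᵗ E u) + 1`. Since `E' = (α + ρ u) E`, the `ρ u E` terms of the
two summands cancel on differentiation, leaving `φ' = ψ0 α β E`, whose sign is that of `ψ0`.
-/

open intervalIntegral Set Real

section Primitive

variable {u : ℝ → ℝ} {a b : ℝ}

theorem continuousOn_primitive_Icc_of_continuousOn (hu : ContinuousOn u (Icc a b)) :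
    ContinuousOn (fun t => ∫ η in a..t, u η) (Icc a b) := by
  rcases le_or_gt a b with hab | hba
  · rw [← uIcc_of_le hab] at hu ⊢
    exact continuousOn_primitive_interval hu.integrableOn_uIcc
  · simp [Icc_eq_empty_of_lt hba]

theorem hasDerivAt_primitive_of_mem_Ioo (hu : ContinuousOn u (Icc a b)) {t : ℝ}
    (ht : t ∈ Ioo a b) : HasDerivAt (fun t => ∫ η in a..t, u η) (u t) t := by
  have hIcc : Icc a b ∈ nhds t := Icc_mem_nhds ht.1 ht.2
  refine integral_hasDerivAt_right ?_ ⟨Icc a b, hIcc, hu.aestronglyMeasurable measurableSet_Icc⟩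
    (hu.continuousAt hIcc)
  have hsub : uIcc a t ⊆ Icc a b := by
    simpa [uIcc_of_le ht.1.le] using Icc_subset_Icc_right ht.2.le
  exact (hu.mono hsub).intervalIntegrable

end Primitive

section Furnace

variable (α ρ : ℝ) (u : ℝ → ℝ)

noncomputable def adjointFactor (t : ℝ) : ℝ :=
  exp (α * t + ρ * ∫ η in (0:ℝ)..t, u η)

noncomputable def switchingClosedForm (β x0 ψ0 t : ℝ) : ℝ :=
  ψ0 * β * adjointFactor α ρ u t
    - ρ * ψ0 * (x0 + β * ∫ η in (0:ℝ)..t, adjointFactor α ρ u η * u η) + 1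

variable {α ρ u} {b : ℝ}

theorem continuousOn_adjointFactor (hu : ContinuousOn u (Icc 0 b)) :
    ContinuousOn (adjointFactor α ρ u) (Icc 0 b) :=
  continuous_exp.comp_continuousOn <|
    (continuousOn_const.mul continuousOn_id).add
      (continuousOn_const.mul (continuousOn_primitive_Icc_of_continuousOn hu))

theorem hasDerivAt_adjointFactor (hu : ContinuousOn u (Icc 0 b)) {t : ℝ} (ht : t ∈ Ioo 0 b) :
    HasDerivAt (adjointFactor α ρ u) (adjointFactor α ρ u t * (α + ρ * u t)) t := by
  have hexponent : HasDerivAt (fun s => α * s + ρ * ∫ η in (0:ℝ)..s, u η) (α + ρ * u t) t := by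
    have := ((hasDerivAt_id' t).const_mul α).add
      ((hasDerivAt_primitive_of_mem_Ioo hu ht).const_mul ρ)
    rwa [mul_one] at this
  exact hexponent.exp

theorem switching_eq_switchingClosedForm (β x0 ψ0 t : ℝ) :
    ψ0 * adjointFactor α ρ u t *
        (β - ρ * (exp (-α * t - ρ * ∫ η in (0:ℝ)..t, u η) *
          (x0 + β * ∫ η in (0:ℝ)..t, adjointFactor α ρ u η * u η))) + 1 =
      switchingClosedForm α ρ u β x0 ψ0 t := by
  have hcancel : adjointFactor α ρ u t * exp (-α * t - ρ * ∫ η in (0:ℝ)..t, u η) = 1 := by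
    rw [adjointFactor, ← exp_add]
    ring_nf
    exact exp_zero
  unfold switchingClosedForm
  linear_combination
    (-(ρ * ψ0 * (x0 + β * ∫ η in (0:ℝ)..t, adjointFactor α ρ u η * u η))) * hcancel

theorem continuousOn_switchingClosedForm (hu : ContinuousOn u (Icc 0 b)) (β x0 ψ0 : ℝ) :
    ContinuousOn (switchingClosedForm α ρ u β x0 ψ0) (Icc 0 b) := by
  have hE := continuousOn_adjointFactor (α := α) (ρ := ρ) hu
  have hF := continuousOn_primitive_Icc_of_continuousOn (hE.mul hu)
  exact ((continuousOn_const.mul hE).sub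
    (continuousOn_const.mul (continuousOn_const.add (continuousOn_const.mul hF)))).add
    continuousOn_const

theorem hasDerivAt_switchingClosedForm (hu : ContinuousOn u (Icc 0 b)) (β x0 ψ0 : ℝ) {t : ℝ}
    (ht : t ∈ Ioo 0 b) :
    HasDerivAt (switchingClosedForm α ρ u β x0 ψ0) (ψ0 * α * β * adjointFactor α ρ u t) t := by
  have hE := hasDerivAt_adjointFactor (α := α) (ρ := ρ) hu ht
  have hF := hasDerivAt_primitive_of_mem_Ioo
    ((continuousOn_adjointFactor (α := α) (ρ := ρ) hu).mul hu) ht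
  exact (((hE.const_mul (ψ0 * β)).sub
    (((hF.const_mul β).const_add x0).const_mul (ρ * ψ0))).add_const 1).congr_deriv
    (by simp only [Pi.mul_apply]; ring)

end Furnace

theorem stmt_5_general (α β ρ : ℝ) (hα : 0 < α) (hβ : 0 < β)
    (tf : ℝ) (u : ℝ → ℝ) (hu : ContinuousOn u (Set.Icc 0 tf))
    (x0 ψ0 : ℝ)
    (x ψ φ : ℝ → ℝ)
    (hx : ∀ t, x t =
      Real.exp (-α * t - ρ * ∫ η in (0:ℝ)..t, u η) *
        (x0 + β * ∫ η in (0:ℝ)..t,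
          Real.exp (α * η + ρ * ∫ s in (0:ℝ)..η, u s) * u η))
    (hψ : ∀ t, ψ t = ψ0 * Real.exp (α * t + ρ * ∫ η in (0:ℝ)..t, u η))
    (hφ : ∀ t, φ t = ψ t * (β - ρ * x t) + 1) :
    φ 0 = ψ0 * (β - ρ * x0) + 1 ∧
      (∀ t ∈ Set.Ioo (0:ℝ) tf,
        HasDerivAt φ (ψ0 * α * β * Real.exp (α * t + ρ * ∫ η in (0:ℝ)..t, u η)) t) ∧
      (0 < ψ0 → StrictMonoOn φ (Set.Icc 0 tf)) ∧
      (ψ0 < 0 → StrictAntiOn φ (Set.Icc 0 tf)) := by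
  have hφ_eq : φ = switchingClosedForm α ρ u β x0 ψ0 := funext fun t => by
    rw [hφ, hψ, hx]
    exact switching_eq_switchingClosedForm β x0 ψ0 t
  subst hφ_eq
  have hcont := continuousOn_switchingClosedForm (α := α) (ρ := ρ) hu β x0 ψ0
  have hderiv : ∀ t ∈ interior (Icc 0 tf), HasDerivWithinAt (switchingClosedForm α ρ u β x0 ψ0)
      (ψ0 * α * β * adjointFactor α ρ u t) (interior (Icc 0 tf)) t := fun t ht =>
    (hasDerivAt_switchingClosedForm hu β x0 ψ0 (by rwa [interior_Icc] at ht)).hasDerivWithinAt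
  have hE_pos (t : ℝ) : 0 < α * β * adjointFactor α ρ u t :=
    mul_pos (mul_pos hα hβ) (exp_pos _)
  refine ⟨by simp [switchingClosedForm, adjointFactor]; ring, fun t ht =>
    hasDerivAt_switchingClosedForm hu β x0 ψ0 ht, fun hψ0 => ?_, fun hψ0 => ?_⟩
  · exact strictMonoOn_of_hasDerivWithinAt_pos (convex_Icc 0 tf) hcont hderiv fun t _ => by
      simpa only [mul_assoc] using mul_pos hψ0 (hE_pos t)
  · exact strictAntiOn_of_hasDerivWithinAt_neg (convex_Icc 0 tf) hcont hderiv fun t _ => by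
      simpa only [mul_assoc] using mul_neg_of_neg_of_pos hψ0 (hE_pos t)

/-- The switching function `φ(t) = ψ(t)·(β − ρ·x(t)) + 1`, built from
the explicit state and adjoint trajectories, satisfies `φ(0) = ψ0·(β − ρ·x0) + 1` and
`φ'(t) = ψ0·α·β·exp(αt + ρ∫₀ᵗ u)` on `(0, t_f)`; in particular it is strictly
increasing on `[0, t_f]` when `ψ0 > 0` and strictly decreasing when `ψ0 < 0`. -/
theorem stmt_5 (α β ρ : ℝ) (hα : 0 < α) (hβ : 0 < β) (hρ : 0 < ρ)
    (tf : ℝ) (htf : 0 < tf) (u : ℝ → ℝ) (hu : ContinuousOn u (Set.Icc 0 tf))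
    (x0 ψ0 : ℝ)
    (x ψ φ : ℝ → ℝ)
    (hx : ∀ t, x t =
      Real.exp (-α * t - ρ * ∫ η in (0:ℝ)..t, u η) *
        (x0 + β * ∫ η in (0:ℝ)..t,
          Real.exp (α * η + ρ * ∫ s in (0:ℝ)..η, u s) * u η))
    (hψ : ∀ t, ψ t = ψ0 * Real.exp (α * t + ρ * ∫ η in (0:ℝ)..t, u η))
    (hφ : ∀ t, φ t = ψ t * (β - ρ * x t) + 1) :
    φ 0 = ψ0 * (β - ρ * x0) + 1 ∧
      (∀ t ∈ Set.Ioo (0:ℝ) tf,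
        HasDerivAt φ (ψ0 * α * β * Real.exp (α * t + ρ * ∫ η in (0:ℝ)..t, u η)) t) ∧
      (0 < ψ0 → StrictMonoOn φ (Set.Icc 0 tf)) ∧
      (ψ0 < 0 → StrictAntiOn φ (Set.Icc 0 tf)) :=
  stmt_5_general α β ρ hα hβ tf u hu x0 ψ0 x ψ φ hx hψ hφ
end

section
/- Let α, β, ρ, x0, ū be positive real numbers satisfying (β − ρ·x0)·ū − α·x0 > 0, and let t_f > 0. Then F(t_f) = x0·exp(−α·t_f) < x0 and F(0) = exp((−α − ρ·ū)·t_f)·(x0 − β·ū/(α + ρ·ū)) + β·ū/(α + ρ·ū) > x0. -/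
/-- `F τ` is the terminal value `x(t_f)` of the bilinear furnace model started at
`x(0) = x0`, with input `u ≡ 0` on `[0, τ)` and `u ≡ ū` on `[τ, t_f]`. -/
noncomputable def F (α β ρ x0 ubar tf τ : ℝ) : ℝ :=
  Real.exp ((-α - ρ * ubar) * (tf - τ)) *
      (x0 * Real.exp (-α * τ) - β * ubar / (α + ρ * ubar)) +
    β * ubar / (α + ρ * ubar)

/-! At `τ = t_f` the input is never switched on and the state decays freely. At `τ = 0` the
input `ū` acts throughout, and the state relaxes monotonically from `x0` towards the
equilibrium `β ū / (α + ρ ū)` of the switched-on dynamics; assumption (A) says precisely that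
this equilibrium lies above `x0`. -/

theorem F_self (α β ρ x0 ubar tf : ℝ) : F α β ρ x0 ubar tf tf = x0 * Real.exp (-α * tf) := by
  simp [F]

theorem F_zero (α β ρ x0 ubar tf : ℝ) :
    F α β ρ x0 ubar tf 0 =
      Real.exp ((-α - ρ * ubar) * tf) * (x0 - β * ubar / (α + ρ * ubar)) +
        β * ubar / (α + ρ * ubar) := by
  simp [F]

lemma Real.exp_neg_mul_lt_one {k t : ℝ} (hk : 0 < k) (ht : 0 < t) : Real.exp (-k * t) < 1 :=
  Real.exp_lt_one_iff.mpr (by nlinarith)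

lemma lt_mul_sub_add_of_lt {θ x c : ℝ} (hθ : θ < 1) (hxc : x < c) : x < θ * (x - c) + c := by
  nlinarith

lemma lt_equilibrium {α β ρ x0 ubar : ℝ} (hk : 0 < α + ρ * ubar)
    (hA : (β - ρ * x0) * ubar - α * x0 > 0) : x0 < β * ubar / (α + ρ * ubar) := by
  rw [lt_div_iff₀ hk]
  linarith

theorem stmt_8_general (α β ρ x0 ubar : ℝ)
    (hα : 0 < α) (hρ : 0 < ρ) (hx0 : 0 < x0) (hu : 0 < ubar)
    (hA : (β - ρ * x0) * ubar - α * x0 > 0) (tf : ℝ) (htf : 0 < tf) :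
    (F α β ρ x0 ubar tf tf = x0 * Real.exp (-α * tf) ∧ F α β ρ x0 ubar tf tf < x0) ∧
    (F α β ρ x0 ubar tf 0 =
        Real.exp ((-α - ρ * ubar) * tf) * (x0 - β * ubar / (α + ρ * ubar)) +
          β * ubar / (α + ρ * ubar) ∧
      F α β ρ x0 ubar tf 0 > x0) := by
  have hk : 0 < α + ρ * ubar := by positivity
  have hdecay : Real.exp ((-α - ρ * ubar) * tf) < 1 := by
    rw [show -α - ρ * ubar = -(α + ρ * ubar) by ring]
    exact Real.exp_neg_mul_lt_one hk htf
  refine ⟨⟨F_self .., ?_⟩, ⟨F_zero .., ?_⟩⟩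
  · rw [F_self]
    exact mul_lt_of_lt_one_right hx0 (Real.exp_neg_mul_lt_one hα htf)
  · rw [F_zero]
    exact lt_mul_sub_add_of_lt hdecay (lt_equilibrium hk hA)

/-- Under assumption (A), at the endpoints of `[0, t_f]` we have
`F(t_f) = x0·exp(−α·t_f) < x0` and
`F(0) = exp((−α − ρ·ū)·t_f)·(x0 − β·ū/(α + ρ·ū)) + β·ū/(α + ρ·ū) > x0`. -/
theorem stmt_8 (α β ρ x0 ubar : ℝ)
    (hα : 0 < α) (hβ : 0 < β) (hρ : 0 < ρ) (hx0 : 0 < x0) (hu : 0 < ubar)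
    (hA : (β - ρ * x0) * ubar - α * x0 > 0) (tf : ℝ) (htf : 0 < tf) :
    (F α β ρ x0 ubar tf tf = x0 * Real.exp (-α * tf) ∧ F α β ρ x0 ubar tf tf < x0) ∧
    (F α β ρ x0 ubar tf 0 =
        Real.exp ((-α - ρ * ubar) * tf) * (x0 - β * ubar / (α + ρ * ubar)) +
          β * ubar / (α + ρ * ubar) ∧
      F α β ρ x0 ubar tf 0 > x0) :=
  stmt_8_general α β ρ x0 ubar hα hρ hx0 hu hA tf htf
end

section
/- Let α, β, ρ, x0, ū be positive real numbers with β > ρ·x0, and let t_f > 0. Then F is differentiable on (0, t_f) with F′(τ) = ū·exp((−α − ρ·ū)·(t_f − τ))·(ρ·x0·exp(−α·τ) − β) < 0 for all τ ∈ (0, t_f); in particular, F is strictly decreasing on [0, t_f]. -/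
open Real

lemma hasDerivAt_F {α β ρ x0 ubar : ℝ} (tf τ : ℝ) (hαρ : α + ρ * ubar ≠ 0) :
    HasDerivAt (F α β ρ x0 ubar tf)
      (ubar * exp ((-α - ρ * ubar) * (tf - τ)) * (ρ * x0 * exp (-α * τ) - β)) τ := by
  set c := β * ubar / (α + ρ * ubar)
  have hE := (((hasDerivAt_id τ).const_sub tf).const_mul (-α - ρ * ubar)).exp
  have hG := (((hasDerivAt_id τ).const_mul (-α)).exp.const_mul x0).sub_const c
  refine HasDerivAt.congr_deriv (f := F α β ρ x0 ubar tf) ((hE.mul hG).add_const c) ?_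
  simp only [c, id]
  field_simp
  ring

lemma F_deriv_neg {α β ρ x0 ubar τ : ℝ} (tf : ℝ) (hα : 0 ≤ α) (hτ : 0 ≤ τ)
    (hρx0 : 0 ≤ ρ * x0) (hβρ : ρ * x0 < β) (hu : 0 < ubar) :
    ubar * exp ((-α - ρ * ubar) * (tf - τ)) * (ρ * x0 * exp (-α * τ) - β) < 0 := by
  have hexp : exp (-α * τ) ≤ 1 := exp_le_one_iff.mpr (by nlinarith)
  have hρx0_exp : ρ * x0 * exp (-α * τ) ≤ ρ * x0 := mul_le_of_le_one_right hρx0 hexp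
  exact mul_neg_of_pos_of_neg (by positivity) (by linarith)

theorem stmt_9_general (α β ρ x0 ubar : ℝ)
    (hα : 0 < α) (hρ : 0 < ρ) (hx0 : 0 < x0) (hu : 0 < ubar)
    (hβρ : β > ρ * x0) (tf : ℝ) :
    (∀ τ ∈ Set.Ioo (0:ℝ) tf,
        HasDerivAt (F α β ρ x0 ubar tf)
          (ubar * Real.exp ((-α - ρ * ubar) * (tf - τ)) *
            (ρ * x0 * Real.exp (-α * τ) - β)) τ ∧
        ubar * Real.exp ((-α - ρ * ubar) * (tf - τ)) *
            (ρ * x0 * Real.exp (-α * τ) - β) < 0) ∧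
      StrictAntiOn (F α β ρ x0 ubar tf) (Set.Icc 0 tf) := by
  have hαρ : α + ρ * ubar ≠ 0 := by positivity
  have hρx0 : 0 ≤ ρ * x0 := by positivity
  have hderiv (τ : ℝ) := hasDerivAt_F (x0 := x0) (β := β) tf τ hαρ
  have hneg (τ : ℝ) (hτ : τ ∈ Set.Ioo 0 tf) :=
    F_deriv_neg tf hα.le hτ.1.le hρx0 hβρ hu
  refine ⟨fun τ hτ => ⟨hderiv τ, hneg τ hτ⟩, ?_⟩
  refine strictAntiOn_of_hasDerivWithinAt_neg (convex_Icc 0 tf)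
    (fun τ _ => (hderiv τ).continuousAt.continuousWithinAt)
    (fun τ _ => (hderiv τ).hasDerivWithinAt) ?_
  rw [interior_Icc]
  exact hneg

/-- If `β > ρ·x0`, then `F` is differentiable on `(0, t_f)` with
`F′(τ) = ū·exp((−α − ρ·ū)·(t_f − τ))·(ρ·x0·exp(−α·τ) − β) < 0`; in particular `F` is
strictly decreasing on `[0, t_f]`. -/
theorem stmt_9 (α β ρ x0 ubar : ℝ)
    (hα : 0 < α) (hβ : 0 < β) (hρ : 0 < ρ) (hx0 : 0 < x0) (hu : 0 < ubar)
    (hβρ : β > ρ * x0) (tf : ℝ) (htf : 0 < tf) :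
    (∀ τ ∈ Set.Ioo (0:ℝ) tf,
        HasDerivAt (F α β ρ x0 ubar tf)
          (ubar * Real.exp ((-α - ρ * ubar) * (tf - τ)) *
            (ρ * x0 * Real.exp (-α * τ) - β)) τ ∧
        ubar * Real.exp ((-α - ρ * ubar) * (tf - τ)) *
            (ρ * x0 * Real.exp (-α * τ) - β) < 0) ∧
      StrictAntiOn (F α β ρ x0 ubar tf) (Set.Icc 0 tf) :=
  stmt_9_general α β ρ x0 ubar hα hρ hx0 hu hβρ tf
end

section
/- Let α, β, ρ, x0, ū be positive real numbers satisfying (β − ρ·x0)·ū − α·x0 > 0, and let t_sw : (0, ∞) → ℝ be the function assigning to each terminal time t_f > 0 the unique switching time t_sw(t_f) ∈ (0, t_f) with F(t_sw(t_f)) = x0. Then t_sw is differentiable and its derivative satisfies d t_sw/d t_f = 1 + α·x0 / ((ρ·x0 − β·exp(α·t_sw(t_f)))·ū). -/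
/-- Auxiliary function: `Gf τ = x0 e^{ρū τ} - c e^{k τ}` where `k = α+ρū`, `c = βū/k`. -/
noncomputable def Gf (α β ρ x0 ubar τ : ℝ) : ℝ :=
  x0 * Real.exp (ρ * ubar * τ) -
    β * ubar / (α + ρ * ubar) * Real.exp ((α + ρ * ubar) * τ)

lemma Gf_hasDerivAt (α β ρ x0 ubar τ : ℝ) :
    HasDerivAt (Gf α β ρ x0 ubar)
      (x0 * (ρ * ubar) * Real.exp (ρ * ubar * τ) -
        β * ubar / (α + ρ * ubar) * ((α + ρ * ubar) * Real.exp ((α + ρ * ubar) * τ))) τ := by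
  have h1 : HasDerivAt (fun t : ℝ => Real.exp (ρ * ubar * t))
      (Real.exp (ρ * ubar * τ) * (ρ * ubar * 1)) τ :=
    ((hasDerivAt_id τ).const_mul (ρ * ubar)).exp
  have h2 : HasDerivAt (fun t : ℝ => Real.exp ((α + ρ * ubar) * t))
      (Real.exp ((α + ρ * ubar) * τ) * ((α + ρ * ubar) * 1)) τ :=
    ((hasDerivAt_id τ).const_mul (α + ρ * ubar)).exp
  have : HasDerivAt (Gf α β ρ x0 ubar) (x0 * (Real.exp (ρ * ubar * τ) * (ρ * ubar * 1)) -
      β * ubar / (α + ρ * ubar) * (Real.exp ((α + ρ * ubar) * τ) * ((α + ρ * ubar) * 1))) τ :=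
    (h1.const_mul x0).sub (h2.const_mul (β * ubar / (α + ρ * ubar)))
  convert this using 1
  ring

lemma Gf_eq_of_F (α β ρ x0 ubar tf τ : ℝ) (hF : F α β ρ x0 ubar tf τ = x0) :
    Gf α β ρ x0 ubar τ =
      (x0 - β * ubar / (α + ρ * ubar)) * Real.exp ((α + ρ * ubar) * tf) := by
  have h3 : Real.exp ((-α - ρ * ubar) * (tf - τ)) *
      (x0 * Real.exp (-α * τ) - β * ubar / (α + ρ * ubar)) =
      x0 - β * ubar / (α + ρ * ubar) := by
    simp only [F] at hF; linarith
  have h4 : Gf α β ρ x0 ubar τ =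
      Real.exp ((α + ρ * ubar) * tf) *
        (Real.exp ((-α - ρ * ubar) * (tf - τ)) *
          (x0 * Real.exp (-α * τ) - β * ubar / (α + ρ * ubar))) := by
    simp only [Gf]
    rw [show ρ * ubar * τ = (α + ρ * ubar) * tf + ((-α - ρ * ubar) * (tf - τ) + -α * τ) by ring,
      show (α + ρ * ubar) * τ = (α + ρ * ubar) * tf + (-α - ρ * ubar) * (tf - τ) by ring]
    simp only [Real.exp_add]
    ring
  rw [h4, h3]; ring

set_option maxHeartbeats 800000 in
/-- Under assumption (A), the switching-time function
`t_sw : (0, ∞) → ℝ`, implicitly defined by `F(t_sw(t_f)) = x0` with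
`t_sw(t_f) ∈ (0, t_f)`, is differentiable with
`d t_sw / d t_f = 1 + α·x0 / ((ρ·x0 − β·exp(α·t_sw(t_f)))·ū)`. -/
theorem stmt_12 (α β ρ x0 ubar : ℝ)
    (hα : 0 < α) (hβ : 0 < β) (hρ : 0 < ρ) (hx0 : 0 < x0) (hu : 0 < ubar)
    (hA : (β - ρ * x0) * ubar - α * x0 > 0)
    (tsw : ℝ → ℝ)
    (htsw : ∀ tf : ℝ, 0 < tf →
      tsw tf ∈ Set.Ioo 0 tf ∧ F α β ρ x0 ubar tf (tsw tf) = x0) :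
    ∀ tf : ℝ, 0 < tf →
      HasDerivAt tsw
        (1 + α * x0 / ((ρ * x0 - β * Real.exp (α * tsw tf)) * ubar)) tf := by
  intro tf htf
  obtain ⟨⟨hτ0pos, hτ0lt⟩, hFeq⟩ := htsw tf htf
  set k : ℝ := α + ρ * ubar with hk_def
  have hk : 0 < k := by rw [hk_def]; positivity
  set c : ℝ := β * ubar / k with hc_def
  have hcx : x0 < c := by
    rw [hc_def, lt_div_iff₀ hk, hk_def]; nlinarith
  have hxc : x0 - c < 0 := by linarith
  have hβρ : ρ * x0 < β := by nlinarith
  have hck : c * k = β * ubar := by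
    rw [hc_def]; field_simp
  set G : ℝ → ℝ := Gf α β ρ x0 ubar with hG_def
  have hGkey : ∀ s : ℝ, 0 < s → G (tsw s) = (x0 - c) * Real.exp (k * s) := by
    intro s hs
    exact Gf_eq_of_F α β ρ x0 ubar s (tsw s) (htsw s hs).2
  have hG' : ∀ τ : ℝ, HasDerivAt G
      (x0 * (ρ * ubar) * Real.exp (ρ * ubar * τ) - c * (k * Real.exp (k * τ))) τ :=
    fun τ => Gf_hasDerivAt α β ρ x0 ubar τ
  set m : ℝ := ubar * (β - ρ * x0) with hm_def
  have hm : 0 < m := by rw [hm_def]; exact mul_pos hu (by linarith)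
  clear_value k c G m
  -- derivative bound on [0,∞)
  have hG'le : ∀ t : ℝ, 0 ≤ t →
      x0 * (ρ * ubar) * Real.exp (ρ * ubar * t) - c * (k * Real.exp (k * t)) ≤ -m := by
    intro t ht
    have hsplit : Real.exp (k * t) = Real.exp (ρ * ubar * t) * Real.exp (α * t) := by
      rw [hk_def, ← Real.exp_add]; ring_nf
    have hA1 : (1 : ℝ) ≤ Real.exp (ρ * ubar * t) := Real.one_le_exp (by positivity)
    have hB1 : (1 : ℝ) ≤ Real.exp (α * t) := Real.one_le_exp (by positivity)
    have hc2 : c * (k * Real.exp (k * t)) =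
        β * ubar * (Real.exp (ρ * ubar * t) * Real.exp (α * t)) := by
      rw [hsplit, ← mul_assoc, hck]
    rw [hc2, hm_def]
    have u1 : 0 ≤ ubar * (β * Real.exp (ρ * ubar * t) * (Real.exp (α * t) - 1)) := by
      apply mul_nonneg hu.le
      apply mul_nonneg (by positivity) (by linarith)
    have u2 : 0 ≤ ubar * ((β - ρ * x0) * (Real.exp (ρ * ubar * t) - 1)) := by
      apply mul_nonneg hu.le
      apply mul_nonneg (by linarith) (by linarith)
    nlinarith [u1, u2]
  -- anti-Lipschitz bound
  have hanti : ∀ u v : ℝ, 0 ≤ u → u ≤ v → m * (v - u) ≤ G u - G v := by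
    intro u v hvu huv
    set H : ℝ → ℝ := fun t => G t + m * t with hH_def
    have hH' : ∀ t : ℝ, HasDerivAt H
        (x0 * (ρ * ubar) * Real.exp (ρ * ubar * t) - c * (k * Real.exp (k * t)) + m) t := by
      intro t
      have h2 : HasDerivAt (fun y : ℝ => m * y) m t := by
        simpa using (hasDerivAt_id t).const_mul m
      exact (hG' t).add h2
    have hmono : AntitoneOn H (Set.Icc u v) := by
      apply antitoneOn_of_deriv_nonpos (convex_Icc u v)
      · exact fun t _ => ((hH' t).continuousAt).continuousWithinAt
      · exact fun t _ => ((hH' t).differentiableAt).differentiableWithinAt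
      · intro t htI
        rw [interior_Icc] at htI
        rw [(hH' t).deriv]
        have : 0 ≤ t := le_of_lt (lt_of_le_of_lt hvu htI.1)
        linarith [hG'le t this]
    have := hmono (Set.left_mem_Icc.mpr huv) (Set.right_mem_Icc.mpr huv) huv
    simp only [hH_def] at this
    linarith
  have habs : ∀ u v : ℝ, 0 ≤ u → 0 ≤ v → m * |u - v| ≤ |G u - G v| := by
    intro u v hu' hv'
    rcases le_total u v with h | h
    · have hv1 := hanti u v hu' h
      have hnn : 0 ≤ m * (v - u) := mul_nonneg hm.le (by linarith)
      have h1 : |u - v| = v - u := by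
        rw [abs_sub_comm]; exact abs_of_nonneg (by linarith)
      have h2 : |G u - G v| = G u - G v := abs_of_nonneg (by linarith)
      rw [h1, h2]; linarith
    · have hv1 := hanti v u hv' h
      have hnn : 0 ≤ m * (u - v) := mul_nonneg hm.le (by linarith)
      have h1 : |u - v| = u - v := abs_of_nonneg (by linarith)
      have h2 : |G u - G v| = G v - G u := by
        rw [abs_sub_comm]; exact abs_of_nonneg (by linarith)
      rw [h1, h2]; linarith
  -- continuity of tsw at tf
  have hcont : ContinuousAt tsw tf := by
    rw [Metric.continuousAt_iff]
    intro ε hε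
    have hφ : ContinuousAt (fun x : ℝ => (x0 - c) * Real.exp (k * x)) tf := by
      fun_prop
    obtain ⟨δ₁, hδ₁, hδ⟩ := Metric.continuousAt_iff.mp hφ (m * ε) (mul_pos hm hε)
    refine ⟨min δ₁ tf, lt_min hδ₁ htf, ?_⟩
    intro x hx
    have hx1 : dist x tf < δ₁ := lt_of_lt_of_le hx (min_le_left _ _)
    have hx3 : |x - tf| < tf := by
      rw [Real.dist_eq] at hx; exact lt_of_lt_of_le hx (min_le_right _ _)
    have hx0 : 0 < x := by
      rcases abs_lt.mp hx3 with ⟨h, _⟩; linarith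
    obtain ⟨⟨hxa, _⟩, _⟩ := htsw x hx0
    have hkey := habs (tsw x) (tsw tf) (le_of_lt hxa) (le_of_lt hτ0pos)
    have hGG : |G (tsw x) - G (tsw tf)| < m * ε := by
      rw [hGkey x hx0, hGkey tf htf]
      have := hδ hx1
      rwa [Real.dist_eq] at this
    rw [Real.dist_eq]
    have := lt_of_le_of_lt hkey hGG
    exact lt_of_mul_lt_mul_left (by linarith) (le_of_lt hm)
  -- the local inverse function
  set τ0 : ℝ := tsw tf with hτ0_def
  clear_value τ0
  have hGτ0 : G τ0 = (x0 - c) * Real.exp (k * tf) := by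
    rw [hτ0_def]; exact hGkey tf htf
  have hratio : G τ0 / (x0 - c) = Real.exp (k * tf) := by
    rw [hGτ0]; exact mul_div_cancel_left₀ _ (ne_of_lt hxc)
  have hratio_ne : G τ0 / (x0 - c) ≠ 0 := by
    rw [hratio]; exact (Real.exp_pos _).ne'
  set D' : ℝ := x0 * (ρ * ubar) * Real.exp (ρ * ubar * τ0) - c * (k * Real.exp (k * τ0))
    with hD'_def
  clear_value D'
  have hD'neg : D' < 0 := by
    rw [hD'_def]
    exact lt_of_le_of_lt (hG'le τ0 (le_of_lt hτ0pos)) (by linarith)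
  set f : ℝ → ℝ := fun τ => (1 / k) * Real.log (G τ / (x0 - c)) with hf_def
  clear_value f
  have hf' : HasDerivAt f ((1 / k) * ((D' / (x0 - c)) / (G τ0 / (x0 - c)))) τ0 := by
    rw [hf_def, hD'_def]
    exact (((hG' τ0).div_const (x0 - c)).log hratio_ne).const_mul (1 / k)
  set D : ℝ := (1 / k) * ((D' / (x0 - c)) / (G τ0 / (x0 - c))) with hD_def
  clear_value D
  have hGτ0ne : G τ0 ≠ 0 := by
    rw [hGτ0]
    exact (mul_neg_of_neg_of_pos hxc (Real.exp_pos _)).ne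
  have hDval : D = D' / (k * G τ0) := by
    rw [hD_def]
    field_simp [ne_of_lt hxc, hGτ0ne, ne_of_gt hk]
    try ring
  have hD_ne : D ≠ 0 := by
    rw [hDval]
    exact div_ne_zero (ne_of_lt hD'neg) (mul_ne_zero (ne_of_gt hk) hGτ0ne)
  have hfg : ∀ᶠ x in nhds tf, f (tsw x) = x := by
    filter_upwards [isOpen_Ioi.mem_nhds (Set.mem_Ioi.mpr htf)] with x hx
    have hx0' : 0 < x := hx
    simp only [hf_def]
    rw [hGkey x hx0', mul_div_cancel_left₀ _ (ne_of_lt hxc), Real.log_exp]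
    field_simp
  have hf2 : HasDerivAt f D (tsw tf) := hτ0_def ▸ hf'
  have hinv : HasDerivAt tsw D⁻¹ tf :=
    HasDerivAt.of_local_left_inverse hcont hf2 hD_ne hfg
  convert hinv using 1
  -- now show the formula equals D⁻¹
  have hsplit : Real.exp (k * τ0) = Real.exp (ρ * ubar * τ0) * Real.exp (α * τ0) := by
    rw [hk_def, ← Real.exp_add]; ring_nf
  have hE1 : (1 : ℝ) < Real.exp (α * τ0) := by
    rw [show (1:ℝ) = Real.exp 0 by rw [Real.exp_zero]]
    exact Real.exp_lt_exp.mpr (mul_pos hα hτ0pos)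
  have hden_neg : (ρ * x0 - β * Real.exp (α * τ0)) * ubar < 0 := by
    apply mul_neg_of_neg_of_pos _ hu
    nlinarith
  have hden_ne : (ρ * x0 - β * Real.exp (α * τ0)) * ubar ≠ 0 := ne_of_lt hden_neg
  rw [hDval, inv_div]
  have hGτ0' : G τ0 = Real.exp (ρ * ubar * τ0) * (x0 - c * Real.exp (α * τ0)) := by
    rw [hG_def]
    unfold Gf
    rw [← hk_def, ← hc_def, hsplit]; ring
  have hD'' : D' = Real.exp (ρ * ubar * τ0) * ubar * (x0 * ρ - β * Real.exp (α * τ0)) := by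
    rw [hD'_def, hsplit, ← mul_assoc, ← mul_assoc, hck]; ring
  rw [hGτ0', hD'', hc_def, hk_def]
  have hexpA : Real.exp (ρ * ubar * τ0) ≠ 0 := (Real.exp_pos _).ne'
  have hden2 : x0 * ρ - β * Real.exp (α * τ0) ≠ 0 := by nlinarith
  have hden3 : ρ * x0 - β * Real.exp (α * τ0) ≠ 0 := by nlinarith
  field_simp
  ring
end

section
/- Let α, β, ρ, x0, ū be positive real numbers satisfying (β − ρ·x0)·ū − α·x0 > 0, and let t_sw : (0, ∞) → ℝ be the function assigning to each terminal time t_f > 0 the unique switching time t_sw(t_f) ∈ (0, t_f) with F(t_sw(t_f)) = x0. Then d t_sw/d t_f = 1 + α·x0/((ρ·x0 − β·exp(α·t_sw(t_f)))·ū) > 0 for every t_f > 0, i.e. t_sw is strictly increasing. -/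
open Set Filter Real

section Inverse

variable {α β : Type*} [LinearOrder α] [LinearOrder β] {G : α → β} {g : β → α}
  {s : Set α} {t : Set β}

theorem StrictMonoOn.strictMonoOn_of_leftInvOn (hG : StrictMonoOn G s) (hg : MapsTo g t s)
    (hinv : LeftInvOn G g t) : StrictMonoOn g t := by
  intro a ha b hb hab
  by_contra! hba
  have := (hG.le_iff_le (hg hb) (hg ha)).2 hba
  rw [hinv ha, hinv hb] at this
  exact hab.not_ge this

theorem StrictMonoOn.continuousAt_of_leftInvOn [TopologicalSpace α] [OrderTopology α]
    [DenselyOrdered α] [TopologicalSpace β] [OrderTopology β] (hG : StrictMonoOn G s)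
    (hs : IsOpen s) (ht : IsOpen t) (hGs : MapsTo G s t) (hg : MapsTo g t s)
    (hinv : LeftInvOn G g t) {x : β} (hx : x ∈ t) :
    ContinuousAt g x := by
  have hsurj : SurjOn g t s := (hG.injOn.rightInvOn_of_leftInvOn hinv hGs hg).surjOn hGs
  exact (hG.strictMonoOn_of_leftInvOn hg hinv).continuousAt_of_image_mem_nhds (ht.mem_nhds hx)
    (mem_of_superset (hs.mem_nhds (hg hx)) hsurj)

end Inverse

theorem Real.mul_exp_neg_mul_lt {a b c τ : ℝ} (ha : 0 ≤ a) (hb : 0 ≤ b) (hτ : 0 ≤ τ)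
    (hbc : b < c) : b * exp (-a * τ) < c :=
  (mul_le_of_le_one_right hb (exp_le_one_iff.2 (by nlinarith))).trans_lt hbc

theorem Real.lt_mul_exp_mul {a b c τ : ℝ} (ha : 0 ≤ a) (hb : 0 ≤ b) (hτ : 0 ≤ τ)
    (hbc : b < c) : b < c * exp (a * τ) :=
  hbc.trans_le (le_mul_of_one_le_right (hb.trans hbc.le) (one_le_exp (mul_nonneg ha hτ)))

theorem inv_one_add_div {K : Type*} [Field K] {q h : K} (hh : h ≠ 0) (hq : h + q ≠ 0) :
    (1 + q / h)⁻¹ = 1 - q / (h + q) := by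
  field_simp
  ring

noncomputable def terminalTime (α β ρ x0 ubar τ : ℝ) : ℝ :=
  τ + (log (β * ubar - (α + ρ * ubar) * x0 * exp (-α * τ)) -
      log (β * ubar - (α + ρ * ubar) * x0)) / (α + ρ * ubar)

section Furnace

variable {α β ρ x0 ubar : ℝ}

@[simp]
theorem terminalTime_zero : terminalTime α β ρ x0 ubar 0 = 0 := by
  simp [terminalTime]

theorem terminalTime_eq_of_F_eq {tf τ : ℝ} (hA : α + ρ * ubar ≠ 0)
    (hτ : 0 < β * ubar - (α + ρ * ubar) * x0 * exp (-α * τ))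
    (hF : F α β ρ x0 ubar tf τ = x0) : terminalTime α β ρ x0 ubar τ = tf := by
  have hK : β * ubar / (α + ρ * ubar) * (α + ρ * ubar) = β * ubar := div_mul_cancel₀ _ hA
  have hexp : exp (-(α + ρ * ubar) * (tf - τ)) *
      (β * ubar - (α + ρ * ubar) * x0 * exp (-α * τ)) = β * ubar - (α + ρ * ubar) * x0 := by
    unfold F at hF
    rw [show -α - ρ * ubar = -(α + ρ * ubar) by ring] at hF
    linear_combination (-(α + ρ * ubar)) * hF + (1 - exp (-(α + ρ * ubar) * (tf - τ))) * hK
  have hlog := congrArg log hexp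
  rw [log_mul (exp_ne_zero _) hτ.ne', log_exp] at hlog
  unfold terminalTime
  rw [← hlog, sub_add_cancel_right, neg_mul, neg_neg, mul_div_cancel_left₀ _ hA]
  ring

theorem hasDerivAt_terminalTime {τ : ℝ} (hA : α + ρ * ubar ≠ 0)
    (hτ : 0 < β * ubar - (α + ρ * ubar) * x0 * exp (-α * τ)) :
    HasDerivAt (terminalTime α β ρ x0 ubar)
      (1 + α * x0 / (β * ubar * exp (α * τ) - (α + ρ * ubar) * x0)) τ := by
  have hexp : HasDerivAt (fun s ↦ exp (-α * s)) (exp (-α * τ) * -α) τ := by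
    simpa using ((hasDerivAt_id τ).const_mul (-α)).exp
  have hlog := ((hexp.const_mul ((α + ρ * ubar) * x0)).const_sub (β * ubar)).log hτ.ne'
    |>.sub_const (log (β * ubar - (α + ρ * ubar) * x0))
  refine ((hasDerivAt_id' τ).add (hlog.div_const (α + ρ * ubar))).congr_deriv ?_
  have hden : β * ubar * exp (α * τ) - (α + ρ * ubar) * x0 =
      (β * ubar - (α + ρ * ubar) * x0 * exp (-α * τ)) / exp (-α * τ) := by
    rw [neg_mul, exp_neg]
    field_simp
  rw [hden]
  field_simp

theorem strictMonoOn_terminalTime (hα : 0 ≤ α) (hx0 : 0 ≤ x0) (hA : 0 < α + ρ * ubar)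
    (hAx : (α + ρ * ubar) * x0 < β * ubar) :
    StrictMonoOn (terminalTime α β ρ x0 ubar) (Ici 0) := by
  have hderiv : ∀ τ ∈ Ici (0 : ℝ), HasDerivAt (terminalTime α β ρ x0 ubar)
      (1 + α * x0 / (β * ubar * exp (α * τ) - (α + ρ * ubar) * x0)) τ := fun τ hτ ↦
    hasDerivAt_terminalTime hA.ne' (sub_pos.2 (mul_exp_neg_mul_lt hα (by positivity) hτ hAx))
  refine strictMonoOn_of_hasDerivWithinAt_pos (convex_Ici 0)
    (fun τ hτ ↦ (hderiv τ hτ).continuousAt.continuousWithinAt)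
    (fun τ hτ ↦ (hderiv τ (interior_subset hτ)).hasDerivWithinAt) fun τ hτ ↦ ?_
  have := sub_pos.2 (lt_mul_exp_mul hα (by positivity) (interior_subset hτ) hAx)
  positivity

end Furnace

theorem stmt_13_general (α β ρ x0 ubar : ℝ)
    (hα : 0 < α) (hρ : 0 < ρ) (hx0 : 0 < x0) (hu : 0 < ubar)
    (hA : (β - ρ * x0) * ubar - α * x0 > 0)
    (tsw : ℝ → ℝ)
    (htsw : ∀ tf : ℝ, 0 < tf →
      tsw tf ∈ Set.Ioo 0 tf ∧ F α β ρ x0 ubar tf (tsw tf) = x0) :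
    (∀ tf : ℝ, 0 < tf →
      HasDerivAt tsw
          (1 + α * x0 / ((ρ * x0 - β * Real.exp (α * tsw tf)) * ubar)) tf ∧
        0 < 1 + α * x0 / ((ρ * x0 - β * Real.exp (α * tsw tf)) * ubar)) ∧
      StrictMonoOn tsw (Set.Ioi 0) := by
  have hApos : 0 < α + ρ * ubar := by positivity
  have hAx : (α + ρ * ubar) * x0 < β * ubar := by linarith
  have hlog (τ : ℝ) (hτ : 0 ≤ τ) : 0 < β * ubar - (α + ρ * ubar) * x0 * exp (-α * τ) :=
    sub_pos.2 (mul_exp_neg_mul_lt hα.le (by positivity) hτ hAx)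
  have hG₀ := strictMonoOn_terminalTime hα.le hx0.le hApos hAx
  have hG := hG₀.mono Ioi_subset_Ici_self
  have hGpos : MapsTo (terminalTime α β ρ x0 ubar) (Ioi 0) (Ioi 0) := fun τ hτ ↦ by
    simpa using hG₀ self_mem_Ici (Ioi_subset_Ici_self hτ) hτ
  have hmaps : MapsTo tsw (Ioi 0) (Ioi 0) := fun tf htf ↦ (htsw tf htf).1.1
  have hinv : LeftInvOn (terminalTime α β ρ x0 ubar) tsw (Ioi 0) := fun tf htf ↦
    terminalTime_eq_of_F_eq hApos.ne' (hlog _ (hmaps htf).le) (htsw tf htf).2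
  refine ⟨fun tf htf ↦ ?_, hG.strictMonoOn_of_leftInvOn hmaps hinv⟩
  have hτ : 0 < tsw tf := hmaps htf
  have hden := sub_pos.2 (lt_mul_exp_mul hα.le (by positivity) hτ.le hAx)
  have hslope : (1 + α * x0 / (β * ubar * exp (α * tsw tf) - (α + ρ * ubar) * x0))⁻¹ =
      1 + α * x0 / ((ρ * x0 - β * exp (α * tsw tf)) * ubar) := by
    rw [inv_one_add_div hden.ne' (add_pos hden (mul_pos hα hx0)).ne',
      show β * ubar * exp (α * tsw tf) - (α + ρ * ubar) * x0 + α * x0 =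
        -((ρ * x0 - β * exp (α * tsw tf)) * ubar) by ring, div_neg, sub_neg_eq_add]
  rw [← hslope]
  exact ⟨(hasDerivAt_terminalTime hApos.ne' (hlog _ hτ.le)).of_local_left_inverse
    (hG.continuousAt_of_leftInvOn isOpen_Ioi isOpen_Ioi hGpos hmaps hinv htf)
    (by positivity) (eventually_of_mem (Ioi_mem_nhds htf) hinv), by positivity⟩

/-- Under assumption (A), the switching-time function satisfies
`d t_sw / d t_f = 1 + α·x0 / ((ρ·x0 − β·exp(α·t_sw(t_f)))·ū) > 0` for every `t_f > 0`,
i.e. `t_sw` is strictly increasing on `(0, ∞)`. -/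
theorem stmt_13 (α β ρ x0 ubar : ℝ)
    (hα : 0 < α) (hβ : 0 < β) (hρ : 0 < ρ) (hx0 : 0 < x0) (hu : 0 < ubar)
    (hA : (β - ρ * x0) * ubar - α * x0 > 0)
    (tsw : ℝ → ℝ)
    (htsw : ∀ tf : ℝ, 0 < tf →
      tsw tf ∈ Set.Ioo 0 tf ∧ F α β ρ x0 ubar tf (tsw tf) = x0) :
    (∀ tf : ℝ, 0 < tf →
      HasDerivAt tsw
          (1 + α * x0 / ((ρ * x0 - β * Real.exp (α * tsw tf)) * ubar)) tf ∧
        0 < 1 + α * x0 / ((ρ * x0 - β * Real.exp (α * tsw tf)) * ubar)) ∧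
      StrictMonoOn tsw (Set.Ioi 0) :=
  stmt_13_general α β ρ x0 ubar hα hρ hx0 hu hA tsw htsw
end

section
/- Let α, β, ρ, x0, ū be positive real numbers satisfying (β − ρ·x0)·ū − α·x0 > 0, let t_sw : (0, ∞) → ℝ be the function assigning to each terminal time t_f > 0 the unique switching time t_sw(t_f) ∈ (0, t_f) with F(t_sw(t_f)) = x0, and define the idle energy function E(t_f) = ū·(t_f − t_sw(t_f)). Then E is twice differentiable on (0, ∞) and its second derivative satisfies E″(t_f) = −(α²·β·x0·exp(α·t_sw(t_f)) / (ρ·x0 − β·exp(α·t_sw(t_f)))²)·(d t_sw/d t_f) < 0 for every t_f > 0. -/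
open Set Filter Topology Real

theorem StrictMonoOn.continuousAt_of_eventually_leftInverse {α β : Type*}
    [LinearOrder α] [TopologicalSpace α] [OrderTopology α] [DenselyOrdered α]
    [LinearOrder β] [TopologicalSpace β] [OrderTopology β]
    {G : α → β} {f : β → α} {s : Set α} {y : β} (hG : StrictMonoOn G s)
    (hs : s ∈ 𝓝 (f y)) (hf : ∀ᶠ z in 𝓝 y, f z ∈ s ∧ G (f z) = z) :
    ContinuousAt f y := by
  have hys : f y ∈ s := mem_of_mem_nhds hs
  have hGy : G (f y) = y := hf.self_of_nhds.2
  refine tendsto_order.2 ⟨fun a ha => ?_, fun a ha => ?_⟩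
  · obtain ⟨l, ⟨hal, hly⟩, hls⟩ := exists_Ioc_subset_of_mem_nhds' hs ha
    obtain ⟨b, hlb, hby⟩ := exists_between hly
    have hbs : b ∈ s := hls ⟨hlb, hby.le⟩
    have hGb : G b < y := hGy ▸ hG hbs hys hby
    filter_upwards [hf, Ioi_mem_nhds hGb] with z ⟨hzs, hGz⟩ hz
    exact hal.trans_lt (hlb.trans ((hG.lt_iff_lt hbs hzs).1 (by rwa [hGz])))
  · obtain ⟨u, ⟨hyu, hua⟩, hus⟩ := exists_Ico_subset_of_mem_nhds' hs ha
    obtain ⟨b, hyb, hbu⟩ := exists_between hyu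
    have hbs : b ∈ s := hus ⟨hyb.le, hbu⟩
    have hGb : y < G b := hGy ▸ hG hys hbs hyb
    filter_upwards [hf, Iio_mem_nhds hGb] with z ⟨hzs, hGz⟩ hz
    exact ((hG.lt_iff_lt hzs hbs).1 (by rwa [hGz])).trans (hbu.trans_le hua)

theorem HasDerivAt.of_strictMonoOn_eventually_leftInverse {G f : ℝ → ℝ} {G' y : ℝ} {s : Set ℝ}
    (hG : StrictMonoOn G s) (hs : s ∈ 𝓝 (f y)) (hf : ∀ᶠ z in 𝓝 y, f z ∈ s ∧ G (f z) = z)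
    (hG' : HasDerivAt G G' (f y)) (hG'0 : G' ≠ 0) : HasDerivAt f G'⁻¹ y :=
  hG'.of_local_left_inverse (hG.continuousAt_of_eventually_leftInverse hs hf) hG'0
    (hf.mono fun _ hz => hz.2)

namespace Furnace

variable {α β ρ x0 ubar : ℝ}

noncomputable def steadyState (α β ρ ubar : ℝ) : ℝ := β * ubar / (α + ρ * ubar)

/-- The solution `t_f` of `F α β ρ x0 ubar t_f τ = x0`: the inverse of the switching time. -/
noncomputable def terminalTime (α β ρ x0 ubar τ : ℝ) : ℝ :=
  τ + (log (steadyState α β ρ ubar - x0 * exp (-α * τ)) - log (steadyState α β ρ ubar - x0)) /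
    (α + ρ * ubar)

noncomputable def terminalTimeDeriv (α β ρ x0 ubar τ : ℝ) : ℝ :=
  ubar * (β - ρ * x0 * exp (-α * τ)) /
    ((α + ρ * ubar) * (steadyState α β ρ ubar - x0 * exp (-α * τ)))

noncomputable def idleEnergyDeriv (α β ρ x0 s : ℝ) : ℝ := α * x0 / (β * exp (α * s) - ρ * x0)

theorem x0_lt_steadyState (hk : 0 < α + ρ * ubar) (hA : (β - ρ * x0) * ubar - α * x0 > 0) :
    x0 < steadyState α β ρ ubar := by
  rw [steadyState, lt_div_iff₀ hk]
  linarith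

theorem mul_exp_neg_mul_lt (hα : 0 ≤ α) {x a τ : ℝ} (hx : 0 ≤ x) (hxa : x < a) (hτ : 0 ≤ τ) :
    x * exp (-α * τ) < a :=
  (mul_le_of_le_one_right hx (exp_le_one_iff.2 (by nlinarith))).trans_lt hxa

theorem terminalTime_eq_of_F_eq (hk : 0 < α + ρ * ubar) {tf τ : ℝ}
    (hτ : x0 * exp (-α * τ) < steadyState α β ρ ubar) (hF : F α β ρ x0 ubar tf τ = x0) :
    terminalTime α β ρ x0 ubar τ = tf := by
  set c := steadyState α β ρ ubar
  have hdecay : exp (-((α + ρ * ubar) * (tf - τ))) * (c - x0 * exp (-α * τ)) = c - x0 := by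
    rw [F, show β * ubar / (α + ρ * ubar) = c from rfl] at hF
    rw [show -((α + ρ * ubar) * (tf - τ)) = (-α - ρ * ubar) * (tf - τ) by ring]
    linear_combination -hF
  have hlog := congrArg log hdecay
  rw [log_mul (exp_ne_zero _) (sub_pos.2 hτ).ne', log_exp] at hlog
  rw [terminalTime, ← hlog]
  field_simp
  ring

theorem hasDerivAt_terminalTime (hk : 0 < α + ρ * ubar) {τ : ℝ}
    (hτ : x0 * exp (-α * τ) < steadyState α β ρ ubar) :
    HasDerivAt (terminalTime α β ρ x0 ubar) (terminalTimeDeriv α β ρ x0 ubar τ) τ := by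
  set c := steadyState α β ρ ubar with hc
  have hkc : c * (α + ρ * ubar) = β * ubar := div_mul_cancel₀ _ hk.ne'
  have hw : HasDerivAt (fun t => c - x0 * exp (-α * t)) (α * (x0 * exp (-α * τ))) τ :=
    (((hasDerivAt_id' τ).const_mul (-α)).exp.const_mul x0 |>.const_sub c).congr_deriv (by ring)
  refine ((hasDerivAt_id' τ).add (((hw.log (sub_pos.2 hτ).ne').sub_const (log (c - x0))).div_const
    (α + ρ * ubar))).congr_deriv ?_
  rw [terminalTimeDeriv, ← hc, mul_assoc ρ]
  set w := x0 * exp (-α * τ)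
  have hcw : c - w ≠ 0 := (sub_pos.2 hτ).ne'
  field_simp
  linear_combination hkc

theorem terminalTimeDeriv_pos (hu : 0 < ubar) (hk : 0 < α + ρ * ubar) {τ : ℝ}
    (hc : x0 * exp (-α * τ) < steadyState α β ρ ubar) (hβ : ρ * x0 * exp (-α * τ) < β) :
    0 < terminalTimeDeriv α β ρ x0 ubar τ :=
  div_pos (mul_pos hu (sub_pos.2 hβ)) (mul_pos hk (sub_pos.2 hc))

theorem strictMonoOn_terminalTime (hα : 0 ≤ α) (hρ : 0 ≤ ρ) (hx0 : 0 ≤ x0) (hu : 0 < ubar)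
    (hk : 0 < α + ρ * ubar) (hc : x0 < steadyState α β ρ ubar) (hβ : ρ * x0 < β) :
    StrictMonoOn (terminalTime α β ρ x0 ubar) (Ici 0) := by
  have hderiv : ∀ τ ∈ Ici (0 : ℝ), HasDerivAt (terminalTime α β ρ x0 ubar)
      (terminalTimeDeriv α β ρ x0 ubar τ) τ := fun τ hτ =>
    hasDerivAt_terminalTime hk (mul_exp_neg_mul_lt hα hx0 hc hτ)
  refine strictMonoOn_of_deriv_pos (convex_Ici 0)
    (fun τ hτ => (hderiv τ hτ).continuousAt.continuousWithinAt) fun τ hτ => ?_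
  rw [interior_Ici] at hτ
  rw [(hderiv τ (Ioi_subset_Ici_self hτ)).deriv]
  exact terminalTimeDeriv_pos hu hk (mul_exp_neg_mul_lt hα hx0 hc hτ.le)
    (mul_exp_neg_mul_lt hα (mul_nonneg hρ hx0) hβ hτ.le)

theorem hasDerivAt_switchingTime (hα : 0 ≤ α) (hρ : 0 ≤ ρ) (hx0 : 0 ≤ x0) (hu : 0 < ubar)
    (hk : 0 < α + ρ * ubar) (hc : x0 < steadyState α β ρ ubar) (hβ : ρ * x0 < β)
    {tsw : ℝ → ℝ} (htsw : ∀ y, 0 < y → 0 < tsw y ∧ F α β ρ x0 ubar y (tsw y) = x0)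
    {y : ℝ} (hy : 0 < y) :
    HasDerivAt tsw (terminalTimeDeriv α β ρ x0 ubar (tsw y))⁻¹ y := by
  have hpos := (htsw y hy).1.le
  refine HasDerivAt.of_strictMonoOn_eventually_leftInverse
    (strictMonoOn_terminalTime hα hρ hx0 hu hk hc hβ) (Ici_mem_nhds (htsw y hy).1) ?_
    (hasDerivAt_terminalTime hk (mul_exp_neg_mul_lt hα hx0 hc hpos))
    (terminalTimeDeriv_pos hu hk (mul_exp_neg_mul_lt hα hx0 hc hpos)
      (mul_exp_neg_mul_lt hα (mul_nonneg hρ hx0) hβ hpos)).ne'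
  filter_upwards [Ioi_mem_nhds hy] with z hz
  obtain ⟨hz0, hF⟩ := htsw z hz
  exact ⟨hz0.le, terminalTime_eq_of_F_eq hk (mul_exp_neg_mul_lt hα hx0 hc hz0.le) hF⟩

theorem mul_one_sub_inv_terminalTimeDeriv (hk : α + ρ * ubar ≠ 0) (hu : ubar ≠ 0) {τ : ℝ}
    (hc : x0 * exp (-α * τ) < steadyState α β ρ ubar) (hβ : ρ * x0 * exp (-α * τ) < β) :
    ubar * (1 - (terminalTimeDeriv α β ρ x0 ubar τ)⁻¹) = idleEnergyDeriv α β ρ x0 τ := by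
  have hcw := (sub_pos.2 hc).ne'
  have hβw := (sub_pos.2 hβ).ne'
  have hkc : (α + ρ * ubar) * steadyState α β ρ ubar = β * ubar := mul_div_cancel₀ _ hk
  have hwe : x0 * exp (-α * τ) * exp (α * τ) = x0 := by rw [mul_assoc, ← exp_add]; simp
  rw [terminalTimeDeriv, idleEnergyDeriv, inv_div, mul_assoc ρ]
  rw [mul_assoc ρ] at hβw
  generalize x0 * exp (-α * τ) = w at hcw hβw hwe ⊢
  have hβ' : β * exp (α * τ) - ρ * x0 ≠ 0 := by
    rw [← hwe, show β * exp (α * τ) - ρ * (w * exp (α * τ)) = exp (α * τ) * (β - ρ * w) by ring]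
    exact mul_ne_zero (exp_ne_zero _) hβw
  field_simp
  linear_combination (ρ * x0 - β * exp (α * τ)) * hkc + α * β * hwe

theorem hasDerivAt_idleEnergyDeriv {s : ℝ} (h : β * exp (α * s) - ρ * x0 ≠ 0) :
    HasDerivAt (idleEnergyDeriv α β ρ x0)
      (-(α ^ 2 * β * x0 * exp (α * s) / (ρ * x0 - β * exp (α * s)) ^ 2)) s := by
  refine ((hasDerivAt_const s (α * x0)).div
    (((hasDerivAt_id' s).const_mul α).exp.const_mul β |>.sub_const (ρ * x0)) h).congr_deriv ?_
  rw [show (ρ * x0 - β * exp (α * s)) ^ 2 = (β * exp (α * s) - ρ * x0) ^ 2 by ring]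
  ring

end Furnace

open Furnace

/-- Under assumption (A), the idle energy function
`E(t_f) = ū·(t_f − t_sw(t_f))` is twice differentiable on `(0, ∞)` with
`E″(t_f) = −(α²·β·x0·exp(α·t_sw(t_f)) / (ρ·x0 − β·exp(α·t_sw(t_f)))²)·t_sw′(t_f) < 0`
for every `t_f > 0`. -/
theorem stmt_14 (α β ρ x0 ubar : ℝ)
    (hα : 0 < α) (hβ : 0 < β) (hρ : 0 < ρ) (hx0 : 0 < x0) (hu : 0 < ubar)
    (hA : (β - ρ * x0) * ubar - α * x0 > 0)
    (tsw : ℝ → ℝ)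
    (htsw : ∀ tf : ℝ, 0 < tf →
      tsw tf ∈ Set.Ioo 0 tf ∧ F α β ρ x0 ubar tf (tsw tf) = x0)
    (E : ℝ → ℝ) (hE : ∀ tf, E tf = ubar * (tf - tsw tf)) :
    ∀ tf : ℝ, 0 < tf →
      DifferentiableAt ℝ E tf ∧
      HasDerivAt (deriv E)
        (-(α ^ 2 * β * x0 * Real.exp (α * tsw tf) /
            (ρ * x0 - β * Real.exp (α * tsw tf)) ^ 2) * deriv tsw tf) tf ∧
      -(α ^ 2 * β * x0 * Real.exp (α * tsw tf) /
          (ρ * x0 - β * Real.exp (α * tsw tf)) ^ 2) * deriv tsw tf < 0 := by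
  obtain rfl : E = fun tf => ubar * (tf - tsw tf) := funext hE
  have hk : 0 < α + ρ * ubar := by positivity
  have hc : x0 < steadyState α β ρ ubar := x0_lt_steadyState hk hA
  have hβρ : ρ * x0 < β := by nlinarith
  have hbounds : ∀ τ : ℝ, 0 ≤ τ →
      x0 * exp (-α * τ) < steadyState α β ρ ubar ∧ ρ * x0 * exp (-α * τ) < β := fun τ hτ =>
    ⟨mul_exp_neg_mul_lt hα.le hx0.le hc hτ, mul_exp_neg_mul_lt hα.le (by positivity) hβρ hτ⟩
  have hpos : ∀ y, 0 < y → 0 < tsw y := fun y hy => (htsw y hy).1.1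
  have htsw' : ∀ y, 0 < y → HasDerivAt tsw (terminalTimeDeriv α β ρ x0 ubar (tsw y))⁻¹ y :=
    fun y hy => hasDerivAt_switchingTime hα.le hρ.le hx0.le hu hk hc hβρ
      (fun z hz => ⟨hpos z hz, (htsw z hz).2⟩) hy
  have hE' : ∀ y, 0 < y → HasDerivAt (fun tf => ubar * (tf - tsw tf))
      (idleEnergyDeriv α β ρ x0 (tsw y)) y := fun y hy => by
    obtain ⟨hcy, hβy⟩ := hbounds _ (hpos y hy).le
    rw [← mul_one_sub_inv_terminalTimeDeriv hk.ne' hu.ne' hcy hβy]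
    exact ((hasDerivAt_id' y).sub (htsw' y hy)).const_mul ubar
  intro tf htf
  have hs := hpos tf htf
  have hden : ρ * x0 < β * exp (α * tsw tf) :=
    hβρ.trans_le (le_mul_of_one_le_right hβ.le (one_le_exp (by positivity)))
  rw [(htsw' tf htf).deriv]
  refine ⟨(hE' tf htf).differentiableAt, ?_, ?_⟩
  · refine ((hasDerivAt_idleEnergyDeriv (sub_pos.2 hden).ne').comp tf (htsw' tf htf))
      |>.congr_of_eventuallyEq ?_
    filter_upwards [Ioi_mem_nhds htf] with y hy using (hE' y hy).deriv
  · exact mul_neg_of_neg_of_pos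
      (neg_neg_of_pos (div_pos (by positivity) (sq_pos_of_neg (sub_neg.2 hden))))
      (inv_pos.2 (terminalTimeDeriv_pos hu hk (hbounds _ hs.le).1 (hbounds _ hs.le).2))
end

section
/- Let α, β, ρ, x0, ū be positive real numbers satisfying (β − ρ·x0)·ū − α·x0 > 0, let t_sw : (0, ∞) → ℝ be the function assigning to each terminal time t_f > 0 the unique switching time t_sw(t_f) ∈ (0, t_f) with F(t_sw(t_f)) = x0, and define the idle energy function E(t_f) = ū·(t_f − t_sw(t_f)). Then E is concave on (0, ∞), i.e. E(λa + (1−λ)b) ≥ λ·E(a) + (1−λ)·E(b) for all a, b > 0 and λ ∈ [0,1]. -/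
/-!
Solving `F τ = x0` for the terminal time expresses `t_f` as a function `returnTime` of the
switching time `τ`. On `τ ≥ 0` this function is strictly increasing, and it is concave because
`τ ↦ c - x0 e^{-ατ}` is concave and `log` is concave and increasing. Hence its inverse `t_sw` is
convex and `E t_f = ū (t_f - t_sw t_f)` is concave.
-/

open Real Set

theorem ConcaveOn.log_comp {E : Type*} [AddCommMonoid E] [Module ℝ E] {s : Set E} {f : E → ℝ}
    (hf : ConcaveOn ℝ s f) (hpos : ∀ x ∈ s, 0 < f x) : ConcaveOn ℝ s fun x ↦ log (f x) := by
  refine ⟨hf.1, fun x hx y hy a b ha hb hab ↦ ?_⟩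
  have hcombo : 0 < a • f x + b • f y := convex_Ioi (0 : ℝ) (hpos x hx) (hpos y hy) ha hb hab
  calc a • log (f x) + b • log (f y) ≤ log (a • f x + b • f y) :=
        strictConcaveOn_log_Ioi.concaveOn.2 (hpos x hx) (hpos y hy) ha hb hab
    _ ≤ log (f (a • x + b • y)) := log_le_log hcombo (hf.2 hx hy ha hb hab)

/-- An increasing concave function has a convex inverse. -/
theorem ConcaveOn.le_combo_of_apply_eq_combo {𝕜 E β : Type*} [Semiring 𝕜] [PartialOrder 𝕜]
    [AddCommMonoid E] [LinearOrder E] [Module 𝕜 E] [AddCommMonoid β] [PartialOrder β] [SMul 𝕜 β]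
    {s : Set E} {φ : E → β} (hφ : ConcaveOn 𝕜 s φ) (hmono : StrictMonoOn φ s)
    {x y z : E} (hx : x ∈ s) (hy : y ∈ s) (hz : z ∈ s) {a b : 𝕜} (ha : 0 ≤ a) (hb : 0 ≤ b)
    (hab : a + b = 1) (hφz : φ z = a • φ x + b • φ y) : z ≤ a • x + b • y := by
  by_contra! hlt
  have := hmono (hφ.1 hx hy ha hb hab) hz hlt
  exact this.not_ge (hφz ▸ hφ.2 hx hy ha hb hab)

theorem mul_exp_neg_mul_le {α x0 τ : ℝ} (hα : 0 ≤ α) (hx0 : 0 ≤ x0) (hτ : 0 ≤ τ) :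
    x0 * exp (-α * τ) ≤ x0 :=
  mul_le_of_le_one_right hx0 (exp_le_one_iff.2 (by nlinarith))

/-- The terminal time at which switching on the input at time `τ` brings the state back to `x0`
(`k = α + ρ ū`, `c = β ū / k`). -/
noncomputable def returnTime (α x0 c k τ : ℝ) : ℝ :=
  τ + (log (c - x0 * exp (-α * τ)) - log (c - x0)) / k

section ReturnTime

variable {α x0 c k : ℝ}

theorem concaveOn_sub_mul_exp_neg_mul (hx0 : 0 ≤ x0) :
    ConcaveOn ℝ univ fun τ ↦ c - x0 * exp (-α * τ) := by
  refine ⟨convex_univ, fun x _ y _ a b ha hb hab ↦ ?_⟩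
  have hexp := convexOn_exp.2 (mem_univ (-α * x)) (mem_univ (-α * y)) ha hb hab
  simp only [smul_eq_mul] at hexp ⊢
  have hlin : -α * (a * x + b * y) = a * (-α * x) + b * (-α * y) := by ring
  have hsum : a * c + b * c = c := by rw [← add_mul, hab, one_mul]
  rw [hlin]
  linarith [mul_le_mul_of_nonneg_left hexp hx0]

theorem returnTime_concaveOn (hα : 0 ≤ α) (hx0 : 0 ≤ x0) (hc : x0 < c) (hk : 0 < k) :
    ConcaveOn ℝ (Ici 0) (returnTime α x0 c k) := by
  have hlog : ConcaveOn ℝ (Ici 0) fun τ ↦ log (c - x0 * exp (-α * τ)) :=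
    ((concaveOn_sub_mul_exp_neg_mul hx0).subset (subset_univ _) (convex_Ici 0)).log_comp
      fun τ hτ ↦ by linarith [mul_exp_neg_mul_le hα hx0 (mem_Ici.1 hτ)]
  refine ((concaveOn_id (convex_Ici 0)).add
    ((hlog.add_const (-log (c - x0))).smul (inv_nonneg.2 hk.le))).congr fun τ _ ↦ ?_
  simp only [returnTime, Pi.add_apply, id, smul_eq_mul]
  ring

theorem returnTime_strictMonoOn (hα : 0 ≤ α) (hx0 : 0 ≤ x0) (hc : x0 < c) (hk : 0 < k) :
    StrictMonoOn (returnTime α x0 c k) (Ici 0) := by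
  intro σ hσ τ _ hστ
  have hexp : x0 * exp (-α * τ) ≤ x0 * exp (-α * σ) :=
    mul_le_mul_of_nonneg_left (exp_le_exp.2 (by nlinarith)) hx0
  have hpos : 0 < c - x0 * exp (-α * σ) := by linarith [mul_exp_neg_mul_le hα hx0 hσ]
  have hlog := log_le_log hpos (by linarith : c - x0 * exp (-α * σ) ≤ c - x0 * exp (-α * τ))
  unfold returnTime
  linarith [div_le_div_of_nonneg_right (sub_le_sub_right hlog (log (c - x0))) hk.le]

end ReturnTime

theorem returnTime_eq_of_F_eq {α β ρ x0 ubar tf τ : ℝ} (hα : 0 ≤ α) (hx0 : 0 ≤ x0)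
    (hk : 0 < α + ρ * ubar) (hc : x0 < β * ubar / (α + ρ * ubar)) (hτ : 0 ≤ τ)
    (hF : F α β ρ x0 ubar tf τ = x0) :
    returnTime α x0 (β * ubar / (α + ρ * ubar)) (α + ρ * ubar) τ = tf := by
  set c := β * ubar / (α + ρ * ubar)
  set k := α + ρ * ubar
  have hpos : 0 < c - x0 * exp (-α * τ) := by linarith [mul_exp_neg_mul_le hα hx0 hτ]
  have hprod : exp (-(k * (tf - τ))) * (c - x0 * exp (-α * τ)) = c - x0 := by
    unfold F at hF
    rw [show (-α - ρ * ubar) * (tf - τ) = -(k * (tf - τ)) by ring] at hF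
    linear_combination -hF
  have hlog := congrArg log hprod
  rw [log_mul (exp_ne_zero _) hpos.ne', log_exp] at hlog
  rw [returnTime, ← hlog]
  field_simp
  ring

theorem stmt_15_general (α β ρ x0 ubar : ℝ)
    (hα : 0 < α) (hρ : 0 < ρ) (hx0 : 0 < x0) (hu : 0 < ubar)
    (hA : (β - ρ * x0) * ubar - α * x0 > 0)
    (tsw : ℝ → ℝ)
    (htsw : ∀ tf : ℝ, 0 < tf →
      tsw tf ∈ Set.Ioo 0 tf ∧ F α β ρ x0 ubar tf (tsw tf) = x0)
    (E : ℝ → ℝ) (hE : ∀ tf, E tf = ubar * (tf - tsw tf)) :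
    ∀ a b l : ℝ, 0 < a → 0 < b → l ∈ Set.Icc (0:ℝ) 1 →
      l * E a + (1 - l) * E b ≤ E (l * a + (1 - l) * b) := by
  rintro a b l ha hb ⟨hl0, hl1⟩
  have hk : 0 < α + ρ * ubar := by positivity
  have hc : x0 < β * ubar / (α + ρ * ubar) := by rw [lt_div_iff₀ hk]; linarith
  have hm : 0 < l * a + (1 - l) * b := convex_Ioi (0 : ℝ) ha hb hl0 (by linarith) (by ring)
  have htsw_nonneg {tf : ℝ} (htf : 0 < tf) : tsw tf ∈ Ici 0 := (htsw tf htf).1.1.le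
  have hreturn {tf : ℝ} (htf : 0 < tf) := returnTime_eq_of_F_eq hα.le hx0.le hk hc
    (htsw_nonneg htf) (htsw tf htf).2
  have hconvex : tsw (l * a + (1 - l) * b) ≤ l * tsw a + (1 - l) * tsw b :=
    (returnTime_concaveOn hα.le hx0.le hc hk).le_combo_of_apply_eq_combo
      (returnTime_strictMonoOn hα.le hx0.le hc hk) (htsw_nonneg ha) (htsw_nonneg hb)
      (htsw_nonneg hm) hl0 (by linarith) (by ring)
      (by rw [hreturn ha, hreturn hb, hreturn hm, smul_eq_mul, smul_eq_mul])
  rw [hE, hE, hE]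
  linarith [mul_le_mul_of_nonneg_left hconvex hu.le]

/-- Under assumption (A), the idle energy function
`E(t_f) = ū·(t_f − t_sw(t_f))` is concave on `(0, ∞)`:
`E(λa + (1−λ)b) ≥ λ·E(a) + (1−λ)·E(b)` for all `a, b > 0` and `λ ∈ [0, 1]`. -/
theorem stmt_15 (α β ρ x0 ubar : ℝ)
    (hα : 0 < α) (hβ : 0 < β) (hρ : 0 < ρ) (hx0 : 0 < x0) (hu : 0 < ubar)
    (hA : (β - ρ * x0) * ubar - α * x0 > 0)
    (tsw : ℝ → ℝ)
    (htsw : ∀ tf : ℝ, 0 < tf →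
      tsw tf ∈ Set.Ioo 0 tf ∧ F α β ρ x0 ubar tf (tsw tf) = x0)
    (E : ℝ → ℝ) (hE : ∀ tf, E tf = ubar * (tf - tsw tf)) :
    ∀ a b l : ℝ, 0 < a → 0 < b → l ∈ Set.Icc (0:ℝ) 1 →
      l * E a + (1 - l) * E b ≤ E (l * a + (1 - l) * b) :=
  stmt_15_general α β ρ x0 ubar hα hρ hx0 hu hA tsw htsw E hE
end
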